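/- arXiv:2201.01351 — 12 statements merged into one kernel-verified Lean document; each statement's English description precedes it below -/
import Mathlib

section
/- For every integer n ≥ 2, the number -1/(1+cos(π/n)) is the greatest element of the set of values ∑_{i=1}^{n} ∑_{j=1}^{n} |i-j|·f(i)·f(j), taken over all functions f : {1,…,n} → ℝ satisfying ∑_{i=1}^{n} f(i) = 0 and ∑_{i=1}^{n} f(i)² = 1. (Equivalently, the quadratic embedding constant of the path graph P_n equals -1/(1+cos(π/n)), and this supremum is attained.) -/
/-!
Write `f = P (· + 1) - P` with the potential `P k = ∑_{i<k} f i`, so `P 0 = P n = 0`. Since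
`|i - j|` counts the `k` separating `i` and `j`, the form equals `-2 ∑ P k ^ 2`, while
`∑ f i ^ 2 = 2 ∑ P k ^ 2 - 2 ∑ P k P (k+1)`. The smallest eigenvalue of the adjacency matrix of
the path on the interior vertices `1, …, n-1` is `-2 cos (π/n)`, i.e.
`∑ P k P (k+1) ≥ -cos (π/n) ∑ P k ^ 2`, which gives the bound; the eigenvector
`P k = sin (k (π - π/n))` attains it.
-/

open Real Finset

theorem sum_range_succ_eq_of_eq_zero {M : Type*} [AddCommMonoid M] {n : ℕ} {g : ℕ → M}
    (h0 : g 0 = 0) (hn : g n = 0) : ∑ k ∈ range n, g (k + 1) = ∑ k ∈ range n, g k := by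
  have h := sum_range_succ' g n
  rw [sum_range_succ, hn, h0] at h
  simpa using h.symm

theorem sum_sum_sub_sq_mul_mul {ι R : Type*} [Fintype ι] [CommRing R] (a f : ι → R)
    (hf : ∑ i, f i = 0) :
    ∑ i, ∑ j, (a i - a j) ^ 2 * f i * f j = -2 * (∑ i, a i * f i) ^ 2 := by
  have h : ∀ i j, (a i - a j) ^ 2 * f i * f j =
      a i ^ 2 * f i * f j + f i * (a j ^ 2 * f j) - 2 * (a i * f i) * (a j * f j) := by
    intro i j; ring
  simp only [h, sum_add_distrib, sum_sub_distrib, ← mul_sum, ← sum_mul, hf]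
  ring

theorem abs_natCast_sub_eq_sum_range {N i j : ℕ} (hi : i < N) (hj : j < N) :
    |(i : ℝ) - j| =
      ∑ k ∈ range N, ((if i < k then (1 : ℝ) else 0) - if j < k then 1 else 0) ^ 2 := by
  have hterm : ∀ k, ((if i < k then (1 : ℝ) else 0) - if j < k then 1 else 0) ^ 2 =
      if k ∈ Ioc (min i j) (max i j) then 1 else 0 := by
    intro k
    simp only [mem_Ioc]
    split_ifs <;> norm_num <;> omega
  have hsub : Ioc (min i j) (max i j) ⊆ range N := by
    intro k hk; rw [mem_Ioc] at hk; rw [mem_range]; omega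
  simp only [hterm, sum_ite_mem, inter_eq_right.2 hsub, sum_const, Nat.card_Ioc, nsmul_one]
  rcases le_total i j with h | h
  · rw [min_eq_left h, max_eq_right h, Nat.cast_sub h, abs_sub_comm,
      abs_of_nonneg (sub_nonneg.2 (by exact_mod_cast h))]
  · rw [min_eq_right h, max_eq_left h, Nat.cast_sub h,
      abs_of_nonneg (sub_nonneg.2 (by exact_mod_cast h))]

theorem sum_fin_sub (n : ℕ) (P : ℕ → ℝ) : ∑ i : Fin n, (P (i + 1) - P i) = P n - P 0 := by
  rw [Fin.sum_univ_eq_sum_range (fun i => P (i + 1) - P i), sum_range_sub]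

theorem sum_fin_ite_lt_mul_sub {n k : ℕ} (hk : k ≤ n) (P : ℕ → ℝ) :
    ∑ i : Fin n, (if (i : ℕ) < k then (1 : ℝ) else 0) * (P (i + 1) - P i) = P k - P 0 := by
  rw [Fin.sum_univ_eq_sum_range (fun i => (if i < k then (1 : ℝ) else 0) * (P (i + 1) - P i)),
    ← sum_range_sub P k]
  simp only [boole_mul]
  rw [← sum_filter]
  congr 1
  ext i; simp only [mem_filter, mem_range]; omega

theorem sum_sum_abs_sub_mul_eq_neg_two_mul_sum_sq {n : ℕ} {P : ℕ → ℝ} (hP0 : P 0 = 0)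
    (hPn : P n = 0) :
    ∑ i : Fin n, ∑ j : Fin n, |(i : ℝ) - j| * (P (i + 1) - P i) * (P (j + 1) - P j) =
      -2 * ∑ k ∈ range n, P k ^ 2 := by
  have hf : ∑ i : Fin n, (P (i + 1) - P i) = 0 := by rw [sum_fin_sub, hP0, hPn, sub_zero]
  simp only [fun i j : Fin n => abs_natCast_sub_eq_sum_range i.isLt j.isLt, sum_mul]
  rw [sum_congr rfl fun i _ => sum_comm, sum_comm, mul_sum]
  refine sum_congr rfl fun k hk => ?_
  rw [sum_sum_sub_sq_mul_mul _ _ hf, sum_fin_ite_lt_mul_sub (mem_range.1 hk).le, hP0, sub_zero]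

theorem sum_fin_sub_sq {n : ℕ} {P : ℕ → ℝ} (hP0 : P 0 = 0) (hPn : P n = 0) :
    ∑ i : Fin n, (P (i + 1) - P i) ^ 2 =
      2 * ∑ k ∈ range n, P k ^ 2 - 2 * ∑ k ∈ range n, P k * P (k + 1) := by
  have hshift : ∑ k ∈ range n, P (k + 1) ^ 2 = ∑ k ∈ range n, P k ^ 2 :=
    sum_range_succ_eq_of_eq_zero (g := fun k => P k ^ 2) (by simp [hP0]) (by simp [hPn])
  have hcross : ∑ k ∈ range n, 2 * P (k + 1) * P k = 2 * ∑ k ∈ range n, P k * P (k + 1) := by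
    rw [mul_sum]
    exact sum_congr rfl fun k _ => by ring
  rw [Fin.sum_univ_eq_sum_range (fun i => (P (i + 1) - P i) ^ 2),
    sum_congr rfl fun k _ => sub_sq (P (k + 1)) (P k), sum_add_distrib, sum_sub_distrib,
    hshift, hcross]
  ring

theorem exists_eq_sub_of_sum_eq_zero {n : ℕ} {f : Fin n → ℝ} (hf : ∑ i, f i = 0) :
    ∃ P : ℕ → ℝ, P 0 = 0 ∧ P n = 0 ∧ f = fun i : Fin n => P (i + 1) - P i := by
  refine ⟨fun k => ∑ i : Fin n, if (i : ℕ) < k then f i else 0, by simp, by simpa using hf, ?_⟩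
  funext i
  rw [← sum_sub_distrib, Fintype.sum_eq_single i]
  · simp
  · intro j hj
    have hji : (j : ℕ) < i + 1 ↔ (j : ℕ) < i := by
      have : (j : ℕ) ≠ i := fun h => hj (Fin.ext h)
      omega
    simp only [hji, sub_self]

theorem div_mul_sq_add_div_mul_sq_add_two_mul_nonneg {p q : ℝ} (hp : 0 < p) (hq : 0 < q)
    (a b : ℝ) : 0 ≤ q / p * a ^ 2 + p / q * b ^ 2 + 2 * a * b := by
  have h : q / p * a ^ 2 + p / q * b ^ 2 + 2 * a * b = (q * a + p * b) ^ 2 / (p * q) := by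
    field_simp
    ring
  rw [h]
  positivity

/-- Weighted AM–GM `-2ab ≤ (w (k+1) / w k) a² + (w k / w (k+1)) b²` summed along the path; the
weights come from a positive Dirichlet eigenvector `w` of the path with eigenvalue `2c`. -/
theorem neg_mul_sum_sq_le_sum_mul_succ {m : ℕ} {w x : ℕ → ℝ} {c : ℝ}
    (hw : ∀ j, 0 < j → j < m → 0 < w j) (hw0 : w 0 = 0) (hwm : w m = 0)
    (hrec : ∀ j, w j + w (j + 2) = 2 * c * w (j + 1)) (hx0 : x 0 = 0) (hxm : x m = 0) :
    -(c * ∑ k ∈ range m, x k ^ 2) ≤ ∑ k ∈ range m, x k * x (k + 1) := by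
  have hterm : ∀ k ∈ range m,
      0 ≤ w (k + 1) / w k * x k ^ 2 + w k / w (k + 1) * x (k + 1) ^ 2 + 2 * x k * x (k + 1) := by
    intro k hk
    rw [mem_range] at hk
    rcases Nat.eq_zero_or_pos k with rfl | hk0
    · simp [hx0, hw0]
    rcases (show k + 1 = m ∨ k + 1 < m by omega) with hkm | hkm
    · simp [hkm, hxm, hwm]
    exact div_mul_sq_add_div_mul_sq_add_two_mul_nonneg (hw k hk0 hk) (hw _ k.succ_pos hkm) _ _
  have hshift : ∑ k ∈ range m, w (k + 1) / w k * x k ^ 2 =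
      ∑ k ∈ range m, w (k + 2) / w (k + 1) * x (k + 1) ^ 2 :=
    (sum_range_succ_eq_of_eq_zero (g := fun k => w (k + 1) / w k * x k ^ 2)
      (by simp [hx0]) (by simp [hxm])).symm
  have hweights : ∀ k ∈ range m,
      w (k + 2) / w (k + 1) * x (k + 1) ^ 2 + w k / w (k + 1) * x (k + 1) ^ 2 =
        2 * c * x (k + 1) ^ 2 := by
    intro k hk
    rw [mem_range] at hk
    rcases (show k + 1 = m ∨ k + 1 < m by omega) with hkm | hkm
    · simp [hkm, hxm]
    have hwk : w (k + 1) ≠ 0 := (hw _ k.succ_pos hkm).ne'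
    rw [← add_mul, ← add_div, add_comm, hrec, mul_div_cancel_right₀ _ hwk]
  have hsq : ∑ k ∈ range m, x (k + 1) ^ 2 = ∑ k ∈ range m, x k ^ 2 :=
    sum_range_succ_eq_of_eq_zero (g := fun k => x k ^ 2) (by simp [hx0]) (by simp [hxm])
  have hsum := sum_nonneg hterm
  rw [sum_add_distrib, sum_add_distrib, hshift, ← sum_add_distrib, sum_congr rfl hweights,
    ← mul_sum, hsq] at hsum
  have hcross : ∑ k ∈ range m, 2 * x k * x (k + 1) = 2 * ∑ k ∈ range m, x k * x (k + 1) := by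
    rw [mul_sum]
    exact sum_congr rfl fun k _ => mul_assoc _ _ _
  linarith

theorem neg_cos_mul_sum_sq_le_sum_mul_succ {m : ℕ} {x : ℕ → ℝ} (hx0 : x 0 = 0)
    (hxm : x m = 0) :
    -(cos (π / m) * ∑ k ∈ range m, x k ^ 2) ≤ ∑ k ∈ range m, x k * x (k + 1) := by
  refine neg_mul_sum_sq_le_sum_mul_succ (w := fun j => sin (j * (π / m))) ?_ (by simp) ?_ ?_
    hx0 hxm
  · intro j hj hjm
    have hm : (0 : ℝ) < m := by exact_mod_cast hj.trans hjm
    apply sin_pos_of_pos_of_lt_pi (by positivity)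
    calc (j : ℝ) * (π / m) < m * (π / m) := by gcongr
      _ = π := mul_div_cancel₀ π hm.ne'
  · rcases eq_or_ne m 0 with rfl | hm
    · simp
    · rw [mul_div_cancel₀ π (by exact_mod_cast hm), sin_pi]
  · intro j
    push_cast
    rw [show (j + 2 : ℝ) * (π / m) = (j + 1) * (π / m) + π / m by ring,
      show (j : ℝ) * (π / m) = (j + 1) * (π / m) - π / m by ring, sin_add, sin_sub]
    ring

theorem sum_range_cos_two_mul_add_eq_zero {n : ℕ} {θ : ℝ} (hθ : sin θ ≠ 0)
    (hnθ : sin (n * θ) = 0) (φ : ℝ) : ∑ k ∈ range n, cos (2 * k * θ + φ) = 0 := by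
  have htel : 2 * sin θ * ∑ k ∈ range n, cos (2 * k * θ + φ) =
      sin (2 * n * θ + (φ - θ)) - sin (φ - θ) := by
    rw [mul_sum]
    convert sum_range_sub (fun k : ℕ => sin (2 * k * θ + (φ - θ))) n using 1
    · refine sum_congr rfl fun k _ => ?_
      rw [sin_sub_sin]
      push_cast
      ring_nf
    · simp
  have hperiod : sin (2 * n * θ + (φ - θ)) = sin (φ - θ) := by
    rw [sin_add, mul_assoc, sin_two_mul, cos_two_mul, cos_sq', hnθ]
    ring
  rw [hperiod, sub_self] at htel
  exact (mul_eq_zero.1 htel).resolve_left (by simpa using hθ)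

theorem sum_range_sin_sq {n : ℕ} {θ : ℝ} (hθ : sin θ ≠ 0) (hnθ : sin (n * θ) = 0) :
    ∑ k ∈ range n, sin (k * θ) ^ 2 = n / 2 := by
  have h := sum_range_cos_two_mul_add_eq_zero hθ hnθ 0
  simp only [sin_sq_eq_half_sub, sum_sub_distrib, sum_const, card_range, nsmul_eq_mul,
    ← sum_div]
  simp only [add_zero, mul_assoc] at h
  rw [h]
  ring

theorem sum_range_sin_mul_sin_succ {n : ℕ} {θ : ℝ} (hθ : sin θ ≠ 0)
    (hnθ : sin (n * θ) = 0) :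
    ∑ k ∈ range n, sin (k * θ) * sin ((k + 1) * θ) = n * cos θ / 2 := by
  have h := sum_range_cos_two_mul_add_eq_zero hθ hnθ θ
  have hprod (k : ℕ) : sin (k * θ) * sin ((k + 1) * θ) = cos θ / 2 - cos (2 * k * θ + θ) / 2 := by
    rw [add_mul, one_mul, sin_add, cos_add, mul_assoc 2, cos_two_mul, sin_two_mul]
    linear_combination cos θ * sin_sq_add_cos_sq (k * θ)
  simp only [hprod, sum_sub_distrib, sum_const, card_range, nsmul_eq_mul, ← sum_div, h]
  ring

theorem one_add_cos_pi_div_pos {n : ℕ} (hn : 2 ≤ n) : 0 < 1 + cos (π / n) := by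
  have hpos : 0 ≤ cos (π / n) := by
    apply cos_nonneg_of_mem_Icc ⟨by linarith [pi_pos, (by positivity : 0 ≤ π / n)], ?_⟩
    exact div_le_div_of_nonneg_left pi_pos.le two_pos (by exact_mod_cast hn)
  linarith

theorem exists_extremal_potential {n : ℕ} (hn : 2 ≤ n) :
    ∃ P : ℕ → ℝ, P 0 = 0 ∧ P n = 0 ∧
      2 * ∑ k ∈ range n, P k ^ 2 - 2 * ∑ k ∈ range n, P k * P (k + 1) = 1 ∧
      -2 * ∑ k ∈ range n, P k ^ 2 = -1 / (1 + cos (π / n)) := by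
  have hn0 : (n : ℝ) ≠ 0 := by positivity
  have hc := one_add_cos_pi_div_pos hn
  set θ := π - π / n
  have hθ : sin θ ≠ 0 := by
    rw [sin_pi_sub]
    refine (sin_pos_of_pos_of_lt_pi (by positivity) (div_lt_self pi_pos ?_)).ne'
    exact_mod_cast hn
  have hnθ : sin (n * θ) = 0 := by
    rw [mul_sub, mul_div_cancel₀ π hn0, sin_sub, sin_nat_mul_pi, sin_pi]
    ring
  set t := √(1 / (n * (1 + cos (π / n))))
  have ht : t ^ 2 = 1 / (n * (1 + cos (π / n))) := sq_sqrt (by positivity)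
  have hsq : ∑ k ∈ range n, (t * sin (k * θ)) ^ 2 = t ^ 2 * (n / 2) := by
    simp only [mul_pow, ← mul_sum, sum_range_sin_sq hθ hnθ]
  have hcross : ∑ k ∈ range n, t * sin (k * θ) * (t * sin ((k + 1 : ℕ) * θ)) =
      t ^ 2 * (n * -cos (π / n) / 2) := by
    push_cast
    rw [← cos_pi_sub, ← sum_range_sin_mul_sin_succ hθ hnθ, mul_sum]
    exact sum_congr rfl fun k _ => by ring
  refine ⟨fun k => t * sin (k * θ), by simp, by simp [hnθ], ?_, ?_⟩
  · rw [hsq, hcross, ht]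
    field_simp
    ring
  · rw [hsq, ht]
    field_simp

/-- The quadratic embedding constant of the path graph `Pₙ` (vertices `1,…,n`,
distance `d(i,j) = |i-j|`) equals `-1/(1+cos(π/n))`, and the supremum is attained. -/
theorem qec_path_graph (n : ℕ) (hn : 2 ≤ n) :
    IsGreatest
      {y : ℝ | ∃ f : Fin n → ℝ,
        (∑ i, f i) = 0 ∧ (∑ i, (f i) ^ 2) = 1 ∧
        y = ∑ i : Fin n, ∑ j : Fin n, |(i : ℝ) - (j : ℝ)| * f i * f j}
      (-1 / (1 + Real.cos (π / n))) := by
  constructor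
  · obtain ⟨P, hP0, hPn, hnorm, hval⟩ := exists_extremal_potential hn
    refine ⟨fun i => P (i + 1) - P i, by rw [sum_fin_sub, hP0, hPn, sub_zero], ?_, ?_⟩
    · rw [sum_fin_sub_sq hP0 hPn, hnorm]
    · rw [sum_sum_abs_sub_mul_eq_neg_two_mul_sum_sq hP0 hPn, hval]
  · rintro y ⟨f, hf0, hf1, rfl⟩
    obtain ⟨P, hP0, hPn, rfl⟩ := exists_eq_sub_of_sum_eq_zero hf0
    rw [sum_fin_sub_sq hP0 hPn] at hf1
    have hbound := neg_cos_mul_sum_sq_le_sum_mul_succ hP0 hPn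
    have hc := one_add_cos_pi_div_pos hn
    rw [sum_sum_abs_sub_mul_eq_neg_two_mul_sum_sq hP0 hPn, neg_div, le_neg, div_le_iff₀ hc]
    linarith
end

section
/- The number -1/2 is the least upper bound of the set of values ∑_{i∈ℕ} ∑_{j∈ℕ} |i-j|·f(i)·f(j), taken over all finitely supported functions f : ℕ → ℝ satisfying ∑_{i} f(i) = 0 and ∑_{i} f(i)² = 1. (That is, QEC(ℕ) = -1/2 for ℕ regarded as the infinite path graph with edges {i,i+1}.) -/
/-!
Write `F k = ∑_{i ≤ k} f i`. The distance `|i - j|` counts the thresholds `k` with exactly one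
of `i ≤ k`, `j ≤ k`, so when `∑ f = 0` the quadratic form equals `-2 ∑ₖ (F k)²`. Since
`f k = F k - F (k - 1)` and `(x - y)² ≤ 2x² + 2y²`, we get `∑ f² ≤ 4 ∑ F²`, hence the upper bound
`-1/2`. It is approached when `F` alternates between `±1` on `0, …, m` and vanishes afterwards:
then `∑ F² = m + 1` and `∑ f² = 4m + 2`, so the normalized value is `-(m + 1)/(2m + 1)`.
-/

open Finset

theorem sum_sum_sq_sub_mul_mul_eq {ι : Type*} (s : Finset ι) (a f : ι → ℝ)
    (hf : ∑ i ∈ s, f i = 0) :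
    ∑ i ∈ s, ∑ j ∈ s, (a i - a j) ^ 2 * f i * f j = -2 * (∑ i ∈ s, a i * f i) ^ 2 := by
  have expand : ∀ i j, (a i - a j) ^ 2 * f i * f j
      = a i ^ 2 * f i * f j + f i * (a j ^ 2 * f j) - 2 * (a i * f i) * (a j * f j) :=
    fun i j => by ring
  rw [sum_congr rfl fun i _ => sum_congr rfl fun j _ => expand i j]
  simp only [sum_add_distrib, sum_sub_distrib, ← mul_sum, ← sum_mul, hf]
  ring

theorem abs_sub_eq_sum_range_sq_sub {i j N : ℕ} (hi : i ≤ N) (hj : j ≤ N) :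
    |(i : ℝ) - j| =
      ∑ k ∈ range N, ((if i ≤ k then 1 else 0) - (if j ≤ k then 1 else 0) : ℝ) ^ 2 := by
  have hk : ∀ k, ((if i ≤ k then 1 else 0) - (if j ≤ k then 1 else 0) : ℝ) ^ 2
      = if k ∈ Ico (min i j) (max i j) then 1 else 0 := by
    intro k
    simp only [mem_Ico]
    split_ifs <;> norm_num <;> omega
  have hIco : Ico (min i j) (max i j) ⊆ range N := fun k hk => by
    simp only [mem_Ico, mem_range] at hk ⊢; omega
  rw [sum_congr rfl fun k _ => hk k, sum_ite_mem, inter_eq_right.mpr hIco, sum_const,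
    Nat.card_Ico, nsmul_one, Nat.cast_sub min_le_max, Nat.cast_max, Nat.cast_min,
    max_sub_min_eq_abs, abs_sub_comm]

theorem sum_range_ite_le_mul {N k : ℕ} (hk : k < N) (f : ℕ → ℝ) :
    ∑ i ∈ range N, (if i ≤ k then 1 else 0) * f i = ∑ i ∈ range (k + 1), f i := by
  simp only [ite_mul, one_mul, zero_mul]
  rw [← sum_filter]
  congr 1
  ext i
  simp only [mem_filter, mem_range]
  omega

theorem sum_sum_abs_sub_mul_mul_eq (f : ℕ → ℝ) {N : ℕ} (hf : ∑ i ∈ range N, f i = 0) :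
    ∑ i ∈ range N, ∑ j ∈ range N, |(i : ℝ) - j| * f i * f j
      = -2 * ∑ k ∈ range N, (∑ i ∈ range (k + 1), f i) ^ 2 := by
  set step : ℕ → ℕ → ℝ := fun k i => if i ≤ k then 1 else 0
  calc ∑ i ∈ range N, ∑ j ∈ range N, |(i : ℝ) - j| * f i * f j
      = ∑ i ∈ range N, ∑ j ∈ range N, ∑ k ∈ range N,
          (step k i - step k j) ^ 2 * f i * f j := by
        refine sum_congr rfl fun i hi => sum_congr rfl fun j hj => ?_
        rw [abs_sub_eq_sum_range_sq_sub (mem_range.mp hi).le (mem_range.mp hj).le,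
          sum_mul, sum_mul]
    _ = ∑ k ∈ range N, ∑ i ∈ range N, ∑ j ∈ range N,
          (step k i - step k j) ^ 2 * f i * f j :=
        (sum_congr rfl fun _ _ => sum_comm).trans sum_comm
    _ = ∑ k ∈ range N, -2 * (∑ i ∈ range N, step k i * f i) ^ 2 :=
        sum_congr rfl fun k _ => sum_sum_sq_sub_mul_mul_eq _ _ _ hf
    _ = -2 * ∑ k ∈ range N, (∑ i ∈ range (k + 1), f i) ^ 2 := by
        rw [mul_sum]
        exact sum_congr rfl fun k hk => by rw [sum_range_ite_le_mul (mem_range.mp hk)]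

theorem sum_range_sq_le_four_mul_sum_range_sq_sum_range_succ (f : ℕ → ℝ) (N : ℕ) :
    ∑ k ∈ range N, f k ^ 2 ≤ 4 * ∑ k ∈ range N, (∑ i ∈ range (k + 1), f i) ^ 2 := by
  set P : ℕ → ℝ := fun n => ∑ i ∈ range n, f i
  have hP : ∑ k ∈ range N, P k ^ 2 ≤ ∑ k ∈ range N, P (k + 1) ^ 2 := by
    have : ∑ k ∈ range N, P (k + 1) ^ 2 = ∑ k ∈ range N, P k ^ 2 + P N ^ 2 := by
      rw [← sum_range_succ, sum_range_succ']
      simp [P]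
    linarith [sq_nonneg (P N)]
  calc ∑ k ∈ range N, f k ^ 2
      = ∑ k ∈ range N, (P (k + 1) - P k) ^ 2 := by simp only [P, sum_range_succ_sub_sum]
    _ ≤ ∑ k ∈ range N, (2 * P (k + 1) ^ 2 + 2 * P k ^ 2) :=
        sum_le_sum fun k _ => by nlinarith [sq_nonneg (P (k + 1) + P k)]
    _ ≤ 4 * ∑ k ∈ range N, P (k + 1) ^ 2 := by
        rw [sum_add_distrib, ← mul_sum, ← mul_sum]; linarith

theorem sum_sum_abs_sub_mul_mul_le (f : ℕ → ℝ) {N : ℕ} (hf : ∑ i ∈ range N, f i = 0) :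
    ∑ i ∈ range N, ∑ j ∈ range N, |(i : ℝ) - j| * f i * f j
      ≤ -(∑ i ∈ range N, f i ^ 2) / 2 := by
  rw [sum_sum_abs_sub_mul_mul_eq f hf]
  linarith [sum_range_sq_le_four_mul_sum_range_sq_sum_range_succ f N]

theorem sum_sum_support_mul_mul_eq_of_subset {ι : Type*} (f : ι →₀ ℝ) {s : Finset ι}
    (hs : f.support ⊆ s) (w : ι → ι → ℝ) :
    ∑ i ∈ f.support, ∑ j ∈ f.support, w i j * f i * f j
      = ∑ i ∈ s, ∑ j ∈ s, w i j * f i * f j := by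
  have hzero : ∀ i ∈ s, i ∉ f.support → f i = 0 := fun i _ hi => Finsupp.notMem_support_iff.mp hi
  rw [sum_subset hs fun i hi his => sum_eq_zero fun j _ => by simp [hzero i hi his]]
  exact sum_congr rfl fun i _ => sum_subset hs fun j hj hjs => by simp [hzero j hj hjs]

theorem exists_finsupp_normalized_of_sum_eq_zero {ι : Type*} (s : Finset ι) (g : ι → ℝ)
    (hg : ∀ i ∉ s, g i = 0) (hsum : ∑ i ∈ s, g i = 0) (hsq : ∑ i ∈ s, g i ^ 2 ≠ 0)
    (w : ι → ι → ℝ) :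
    ∃ f : ι →₀ ℝ, ∑ i ∈ f.support, f i = 0 ∧ ∑ i ∈ f.support, f i ^ 2 = 1 ∧
      ∑ i ∈ f.support, ∑ j ∈ f.support, w i j * f i * f j
        = (∑ i ∈ s, ∑ j ∈ s, w i j * g i * g j) / ∑ i ∈ s, g i ^ 2 := by
  set c := ∑ i ∈ s, g i ^ 2
  set t := (√c)⁻¹
  have ht : t ^ 2 = c⁻¹ := by
    rw [inv_pow, Real.sq_sqrt (sum_nonneg fun i _ => sq_nonneg (g i))]
  let f := Finsupp.onFinset s (fun i => t * g i) fun i hi => by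
    by_contra his; simp [hg i his] at hi
  have hs : f.support ⊆ s := Finsupp.support_onFinset_subset
  have hf : ∀ i, f i = t * g i := fun i => rfl
  refine ⟨f, ?_, ?_, ?_⟩
  · refine (f.sum_of_support_subset hs (fun _ x => x) fun _ _ => rfl).trans ?_
    simp only [hf, ← mul_sum, hsum, mul_zero]
  · refine (f.sum_of_support_subset hs (fun _ x => x ^ 2) fun _ _ => zero_pow two_ne_zero).trans ?_
    simp only [hf, mul_pow, ← mul_sum]
    rw [ht, inv_mul_cancel₀ hsq]
  · rw [sum_sum_support_mul_mul_eq_of_subset f hs, div_eq_mul_inv, ← ht, sum_mul]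
    refine sum_congr rfl fun i _ => ?_
    rw [sum_mul]
    exact sum_congr rfl fun j _ => by rw [hf, hf]; ring

def alternatingPartialSum (m k : ℕ) : ℝ := if 1 ≤ k ∧ k ≤ m + 1 then (-1) ^ k else 0

def alternatingIncrement (m k : ℕ) : ℝ :=
  alternatingPartialSum m (k + 1) - alternatingPartialSum m k

theorem alternatingPartialSum_eq_zero {m k : ℕ} (hk : k = 0 ∨ m + 2 ≤ k) :
    alternatingPartialSum m k = 0 :=
  if_neg (by omega)

theorem alternatingPartialSum_sq {m k : ℕ} (hk : 1 ≤ k) (hkm : k ≤ m + 1) :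
    alternatingPartialSum m k ^ 2 = 1 := by
  simp [alternatingPartialSum, hk, hkm, ← pow_mul]

theorem sum_range_alternatingIncrement (m n : ℕ) :
    ∑ k ∈ range n, alternatingIncrement m k = alternatingPartialSum m n := by
  unfold alternatingIncrement
  rw [sum_range_sub, alternatingPartialSum_eq_zero (Or.inl rfl), sub_zero]

theorem alternatingIncrement_eq_zero {m k : ℕ} (hk : m + 2 ≤ k) :
    alternatingIncrement m k = 0 := by
  rw [alternatingIncrement, alternatingPartialSum_eq_zero (Or.inr hk),
    alternatingPartialSum_eq_zero (Or.inr (by omega)), sub_zero]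

theorem sum_range_alternatingIncrement_sq (m : ℕ) :
    ∑ k ∈ range (m + 2), alternatingIncrement m k ^ 2 = 4 * m + 2 := by
  have first : alternatingIncrement m 0 ^ 2 = 1 := by
    rw [alternatingIncrement, alternatingPartialSum_eq_zero (Or.inl rfl), sub_zero,
      alternatingPartialSum_sq le_rfl (by omega)]
  have interior : ∀ k ∈ range m, alternatingIncrement m (k + 1) ^ 2 = 4 := fun k hk => by
    have hk := mem_range.mp hk
    rw [alternatingIncrement, alternatingPartialSum, alternatingPartialSum, if_pos (by omega),
      if_pos (by omega), pow_succ _ (k + 1)]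
    rcases neg_one_pow_eq_or ℝ (k + 1) with h | h <;> rw [h] <;> norm_num
  have last : alternatingIncrement m (m + 1) ^ 2 = 1 := by
    rw [alternatingIncrement, alternatingPartialSum_eq_zero (Or.inr le_rfl), zero_sub, neg_sq,
      alternatingPartialSum_sq (by omega) le_rfl]
  rw [sum_range_succ, sum_range_succ', sum_congr rfl interior, sum_const, card_range,
    nsmul_eq_mul, first, last]
  ring

theorem sum_sum_abs_sub_mul_alternatingIncrement (m : ℕ) :
    ∑ i ∈ range (m + 2), ∑ j ∈ range (m + 2),
        |(i : ℝ) - j| * alternatingIncrement m i * alternatingIncrement m j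
      = -2 * (m + 1) := by
  rw [sum_sum_abs_sub_mul_mul_eq _ (by rw [sum_range_alternatingIncrement,
    alternatingPartialSum_eq_zero (Or.inr le_rfl)])]
  simp only [sum_range_alternatingIncrement]
  rw [sum_range_succ, alternatingPartialSum_eq_zero (Or.inr le_rfl), sum_congr rfl fun k hk =>
    alternatingPartialSum_sq (by omega) (by have := mem_range.mp hk; omega)]
  simp

theorem sum_sum_support_abs_sub_mul_mul_le (f : ℕ →₀ ℝ) (hf : ∑ i ∈ f.support, f i = 0) :
    ∑ i ∈ f.support, ∑ j ∈ f.support, |(i : ℝ) - j| * f i * f j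
      ≤ -(∑ i ∈ f.support, f i ^ 2) / 2 := by
  obtain ⟨N, hN⟩ := f.support.exists_nat_subset_range
  have hsum : ∑ i ∈ f.support, f i = ∑ i ∈ range N, f i :=
    f.sum_of_support_subset hN (fun _ x => x) fun _ _ => rfl
  have hsq : ∑ i ∈ f.support, f i ^ 2 = ∑ i ∈ range N, f i ^ 2 :=
    f.sum_of_support_subset hN (fun _ x => x ^ 2) fun _ _ => zero_pow two_ne_zero
  rw [sum_sum_support_mul_mul_eq_of_subset f hN, hsq]
  exact sum_sum_abs_sub_mul_mul_le f (hsum ▸ hf)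

theorem exists_sum_sum_support_abs_sub_mul_mul_eq (m : ℕ) :
    ∃ f : ℕ →₀ ℝ, ∑ i ∈ f.support, f i = 0 ∧ ∑ i ∈ f.support, f i ^ 2 = 1 ∧
      ∑ i ∈ f.support, ∑ j ∈ f.support, |(i : ℝ) - j| * f i * f j
        = -1 / 2 - 1 / (4 * m + 2) := by
  have hsum : ∑ k ∈ range (m + 2), alternatingIncrement m k = 0 := by
    rw [sum_range_alternatingIncrement, alternatingPartialSum_eq_zero (Or.inr le_rfl)]
  have hsq : ∑ k ∈ range (m + 2), alternatingIncrement m k ^ 2 ≠ 0 := by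
    rw [sum_range_alternatingIncrement_sq]; positivity
  obtain ⟨f, hf, hf2, hQ⟩ := exists_finsupp_normalized_of_sum_eq_zero (range (m + 2))
    (alternatingIncrement m) (fun k hk => alternatingIncrement_eq_zero (by simpa using hk))
    hsum hsq fun i j => |(i : ℝ) - j|
  refine ⟨f, hf, hf2, ?_⟩
  rw [hQ, sum_sum_abs_sub_mul_alternatingIncrement, sum_range_alternatingIncrement_sq]
  field_simp
  ring

/-- `QEC(ℕ) = -1/2`: for the infinite path graph on `ℕ` (distance `d(i,j) = |i-j|`),
`-1/2` is the least upper bound of `∑ᵢ∑ⱼ |i-j| f(i) f(j)` over finitely supported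
`f : ℕ → ℝ` with `∑ f = 0` and `∑ f² = 1`. -/
theorem qec_nat :
    IsLUB
      {y : ℝ | ∃ f : ℕ →₀ ℝ,
        (∑ i ∈ f.support, f i) = 0 ∧ (∑ i ∈ f.support, (f i) ^ 2) = 1 ∧
        y = ∑ i ∈ f.support, ∑ j ∈ f.support, |(i : ℝ) - (j : ℝ)| * f i * f j}
      (-1 / 2) := by
  refine ⟨?_, fun b hb => le_of_forall_pos_le_add fun ε hε => ?_⟩
  · rintro y ⟨f, hf, hf2, rfl⟩
    simpa [hf2] using sum_sum_support_abs_sub_mul_mul_le f hf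
  · obtain ⟨m, hm⟩ := exists_nat_one_div_lt hε
    obtain ⟨f, hf, hf2, hQ⟩ := exists_sum_sum_support_abs_sub_mul_mul_eq m
    have hbound : -1 / 2 - 1 / (4 * m + 2) ≤ b := hb ⟨f, hf, hf2, hQ.symm⟩
    have hgap : 1 / (4 * (m : ℝ) + 2) ≤ 1 / (m + 1) :=
      one_div_le_one_div_of_le (by positivity) (by linarith [m.cast_nonneg (α := ℝ)])
    linarith
end

section
/- The number -1/2 is the least upper bound of the set of values ∑_{i∈ℤ} ∑_{j∈ℤ} |i-j|·f(i)·f(j), taken over all finitely supported functions f : ℤ → ℝ satisfying ∑_{i} f(i) = 0 and ∑_{i} f(i)² = 1. (That is, QEC(ℤ) = -1/2 for ℤ regarded as the two-sided infinite path graph with edges {i,i+1}.) -/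
/-!
Write `F k = ∑_{i ≤ k} f i`. Since `|i - j|` counts the `k` with exactly one of `i ≤ k`, `j ≤ k`,
the condition `∑ f = 0` turns the form into `-2 ∑ₖ F k ²`. As `f k = F k - F (k - 1)`, we get
`∑ f² ≤ 2 ∑ₖ (F k ² + F (k - 1) ²) ≤ 4 ∑ₖ F k ²`, hence the bound `-1/2`. It is approached by
the `f` whose partial sums alternate `±1` on `{0, …, n}`: there `∑ F² = n + 1` and
`∑ f² = 4n + 2`, so the normalized value is `-(n + 1) / (2n + 1)`.
-/

open Finset

noncomputable def distQuadForm (s : Finset ℤ) (f : ℤ → ℝ) : ℝ :=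
  ∑ i ∈ s, ∑ j ∈ s, |(i : ℝ) - (j : ℝ)| * f i * f j

noncomputable def cumSum (s : Finset ℤ) (f : ℤ → ℝ) (k : ℤ) : ℝ :=
  ∑ i ∈ s with i ≤ k, f i

section cumSum

variable {s : Finset ℤ} {f : ℤ → ℝ} {k : ℤ}

theorem cumSum_eq_zero (h : ∀ i ∈ s, k < i) : cumSum s f k = 0 :=
  sum_eq_zero fun i hi => absurd (mem_filter.1 hi).2 (not_le.2 (h i (mem_filter.1 hi).1))

theorem cumSum_eq_sum (h : ∀ i ∈ s, i ≤ k) : cumSum s f k = ∑ i ∈ s, f i := by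
  rw [cumSum, filter_true_of_mem h]

theorem cumSum_sub_cumSum_sub_one :
    cumSum s f k - cumSum s f (k - 1) = if k ∈ s then f k else 0 := by
  have hsplit : {i ∈ s | i ≤ k} = {i ∈ s | i = k} ∪ {i ∈ s | i ≤ k - 1} := by
    ext i; simp only [mem_filter, mem_union, ← and_or_left]; exact and_congr_right fun _ => by omega
  have hdisj : Disjoint {i ∈ s | i = k} {i ∈ s | i ≤ k - 1} :=
    disjoint_filter.2 fun i _ h => by omega
  rw [cumSum, cumSum, hsplit, sum_union hdisj, add_sub_cancel_right, sum_filter,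
    sum_ite_eq' s k f]

theorem eq_of_forall_sub_sub_one_eq {F G : ℤ → ℝ} (h : ∀ k, F k - F (k - 1) = G k - G (k - 1))
    {k₀ : ℤ} (h₀ : F k₀ = G k₀) : F = G := by
  funext k
  induction k using Int.inductionOn' (b := k₀) with
  | zero => exact h₀
  | succ k _ ih => have := h (k + 1); rw [add_sub_cancel_right] at this; linarith
  | pred k _ ih => have := h k; linarith

theorem cumSum_sub_sub_one {G : ℤ → ℝ} {a : ℤ} (hs : ∀ i ∈ s, a ≤ i) (ha : G (a - 1) = 0)
    (hG : ∀ k ∉ s, G k = G (k - 1)) : cumSum s (fun k => G k - G (k - 1)) = G := by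
  refine eq_of_forall_sub_sub_one_eq (fun k => ?_) (k₀ := a - 1) ?_
  · rw [cumSum_sub_cumSum_sub_one]
    split_ifs with hk
    · rfl
    · rw [hG k hk, sub_self]
  · rw [ha]
    exact cumSum_eq_zero fun i hi => by have := hs i hi; omega

end cumSum

theorem abs_sub_eq_sum_Ico {a b i j : ℤ} (hi : i ∈ Ico a b) (hj : j ∈ Ico a b) :
    |(i : ℝ) - j| =
      ∑ k ∈ Ico a b, ((if i ≤ k then 1 else 0) - (if j ≤ k then 1 else 0) : ℝ) ^ 2 := by
  wlog hij : i ≤ j generalizing i j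
  · rw [abs_sub_comm, this hj hi (by omega)]
    exact sum_congr rfl fun k _ => by ring
  have hterm : ∀ k, ((if i ≤ k then 1 else 0) - (if j ≤ k then 1 else 0) : ℝ) ^ 2 =
      if k ∈ Ico i j then 1 else 0 := by
    intro k; simp only [mem_Ico]; split_ifs <;> (try omega) <;> norm_num
  rw [sum_congr rfl fun k _ => hterm k, sum_ite_mem, sum_const, nsmul_one,
    inter_eq_right.2 (Ico_subset_Ico (mem_Ico.1 hi).1 (mem_Ico.1 hj).2.le), Int.card_Ico,
    ← Int.cast_natCast, Int.toNat_of_nonneg (by omega), abs_sub_comm,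
    abs_of_nonneg (by exact_mod_cast sub_nonneg.2 hij)]
  push_cast; ring

section window

variable {s : Finset ℤ} {f : ℤ → ℝ} {a b : ℤ}

theorem distQuadForm_eq_neg_two_mul_sum_cumSum_sq (hs : s ⊆ Ico a b) (h0 : ∑ i ∈ s, f i = 0) :
    distQuadForm s f = -2 * ∑ k ∈ Ico a b, cumSum s f k ^ 2 := by
  set χ : ℤ → ℤ → ℝ := fun i k => if i ≤ k then 1 else 0
  have hcum : ∀ k, cumSum s f k = ∑ i ∈ s, χ i k * f i := fun k => by
    simp only [cumSum, sum_filter, χ, ite_mul, one_mul, zero_mul]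
  calc distQuadForm s f
      = ∑ i ∈ s, ∑ j ∈ s, ∑ k ∈ Ico a b, (χ i k - χ j k) ^ 2 * f i * f j :=
        sum_congr rfl fun i hi => sum_congr rfl fun j hj => by
          rw [abs_sub_eq_sum_Ico (hs hi) (hs hj), sum_mul, sum_mul]
    _ = ∑ k ∈ Ico a b, ∑ i ∈ s, ∑ j ∈ s, (χ i k - χ j k) ^ 2 * f i * f j :=
        (sum_congr rfl fun i _ => sum_comm).trans sum_comm
    _ = ∑ k ∈ Ico a b, -2 * cumSum s f k ^ 2 := sum_congr rfl fun k _ => by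
        have hexpand : ∀ i j, (χ i k - χ j k) ^ 2 * f i * f j =
            χ i k * f i * f j + f i * (χ j k * f j) - 2 * (χ i k * f i * (χ j k * f j)) := by
          intro i j; simp only [χ]; split_ifs <;> ring
        simp only [hexpand, sum_sub_distrib, sum_add_distrib, ← mul_sum, ← sum_mul, ← hcum, h0]
        ring
    _ = -2 * ∑ k ∈ Ico a b, cumSum s f k ^ 2 := (mul_sum _ _ _).symm

theorem sum_sq_le_four_mul_sum_cumSum_sq (hs : s ⊆ Ico a b) :
    ∑ i ∈ s, f i ^ 2 ≤ 4 * ∑ k ∈ Ico a b, cumSum s f k ^ 2 := by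
  set F := cumSum s f
  have hshift : ∑ k ∈ Ico a b, F (k - 1) ^ 2 ≤ ∑ k ∈ Ico a b, F k ^ 2 :=
    calc ∑ k ∈ Ico a b, F (k - 1) ^ 2 = ∑ k ∈ Ico (a - 1) (b - 1), F k ^ 2 := by
          simpa only [← sub_eq_add_neg] using sum_Ico_add' (fun k => F k ^ 2) a b (-1)
      _ ≤ ∑ k ∈ Ico (a - 1) b, F k ^ 2 :=
          sum_le_sum_of_subset_of_nonneg (Ico_subset_Ico_right (by omega))
            fun _ _ _ => sq_nonneg _
      _ = ∑ k ∈ Ico a b, F k ^ 2 := by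
          refine (sum_subset (Ico_subset_Ico_left (by omega)) fun k hk hk' => ?_).symm
          rw [show F k = 0 from cumSum_eq_zero fun i hi => ?_, sq, zero_mul]
          have := mem_Ico.1 (hs hi)
          simp only [mem_Ico] at hk hk'
          omega
  calc ∑ i ∈ s, f i ^ 2 = ∑ k ∈ Ico a b, (F k - F (k - 1)) ^ 2 := by
        simp only [F, cumSum_sub_cumSum_sub_one, ite_pow, ne_eq, OfNat.ofNat_ne_zero,
          not_false_eq_true, zero_pow]
        rw [sum_ite_mem, inter_eq_right.2 hs]
    _ ≤ ∑ k ∈ Ico a b, (2 * F k ^ 2 + 2 * F (k - 1) ^ 2) :=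
        sum_le_sum fun k _ => by nlinarith [sq_nonneg (F k + F (k - 1))]
    _ ≤ 4 * ∑ k ∈ Ico a b, F k ^ 2 := by
        rw [sum_add_distrib, ← mul_sum, ← mul_sum]; linarith

end window

theorem distQuadForm_le_neg_half_sum_sq (s : Finset ℤ) (f : ℤ → ℝ) (h0 : ∑ i ∈ s, f i = 0) :
    distQuadForm s f ≤ -(∑ i ∈ s, f i ^ 2) / 2 := by
  obtain ⟨a, ha⟩ := s.bddBelow
  obtain ⟨b, hb⟩ := s.bddAbove
  have hs : s ⊆ Ico a (b + 1) := fun i hi => mem_Ico.2 ⟨ha hi, Int.lt_add_one_of_le (hb hi)⟩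
  rw [distQuadForm_eq_neg_two_mul_sum_cumSum_sq hs h0]
  linarith [sum_sq_le_four_mul_sum_cumSum_sq (f := f) hs]

theorem exists_finsupp_normalized (s : Finset ℤ) (g : ℤ → ℝ) (h0 : ∑ i ∈ s, g i = 0)
    (hpos : 0 < ∑ i ∈ s, g i ^ 2) :
    ∃ f : ℤ →₀ ℝ, ∑ i ∈ f.support, f i = 0 ∧ ∑ i ∈ f.support, f i ^ 2 = 1 ∧
      distQuadForm s g / ∑ i ∈ s, g i ^ 2 = distQuadForm f.support f := by
  set c := (√(∑ i ∈ s, g i ^ 2))⁻¹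
  have hc : c ^ 2 = (∑ i ∈ s, g i ^ 2)⁻¹ := by rw [inv_pow, Real.sq_sqrt hpos.le]
  let f : ℤ →₀ ℝ := Finsupp.onFinset s (fun k => if k ∈ s then c * g k else 0) fun k hk => by
    by_contra h; exact hk (if_neg h)
  have hsum : ∀ φ : ℤ → ℝ → ℝ, (∀ i, φ i 0 = 0) →
      ∑ i ∈ f.support, φ i (f i) = ∑ i ∈ s, φ i (c * g i) := fun φ hφ =>
    (sum_subset Finsupp.support_onFinset_subset fun i _ hi => by
        rw [Finsupp.notMem_support_iff.1 hi, hφ]).trans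
      (sum_congr rfl fun i hi => by rw [Finsupp.onFinset_apply, if_pos hi])
  refine ⟨f, ?_, ?_, ?_⟩
  · rw [hsum (fun _ x => x) fun _ => rfl, ← mul_sum, h0, mul_zero]
  · rw [hsum (fun _ x => x ^ 2) fun _ => zero_pow two_ne_zero]
    simp only [mul_pow, ← mul_sum, hc, inv_mul_cancel₀ hpos.ne']
  · unfold distQuadForm
    rw [hsum (fun i x => ∑ j ∈ f.support, |(i : ℝ) - j| * x * f j) fun _ => by simp]
    rw [div_eq_mul_inv, ← hc, sum_mul]
    refine sum_congr rfl fun i _ => ?_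
    rw [hsum (fun j y => |(i : ℝ) - j| * (c * g i) * y) fun _ => mul_zero _, sum_mul]
    exact sum_congr rfl fun j _ => by ring

-- The partial sums of the extremal `f`: alternation makes `(F k - F (k - 1))² = 4` in the bulk.
noncomputable def alternating (n : ℕ) (k : ℤ) : ℝ := if k ∈ Icc 0 (n : ℤ) then (-1) ^ k else 0

theorem alternating_sq (n : ℕ) (k : ℤ) :
    alternating n k ^ 2 = if k ∈ Icc 0 (n : ℤ) then 1 else 0 := by
  unfold alternating; split_ifs
  · rw [← sq_abs, abs_neg_one_zpow, one_pow]
  · exact zero_pow two_ne_zero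

theorem alternating_sub_sq (n : ℕ) (k : ℤ) :
    (alternating n k - alternating n (k - 1)) ^ 2 =
      (if k ∈ Icc 0 (n : ℤ) then 1 else 0) + (if k ∈ Icc 1 (n + 1 : ℤ) then 1 else 0) +
        2 * (if k ∈ Icc 1 (n : ℤ) then 1 else 0) := by
  have hsq : ((-1 : ℝ) ^ k) ^ 2 = 1 := by rw [← sq_abs, abs_neg_one_zpow, one_pow]
  have hpred : (-1 : ℝ) ^ (k - 1) = -(-1) ^ k := by
    rw [zpow_sub_one₀ (neg_ne_zero.2 one_ne_zero), inv_neg_one, mul_neg_one]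
  unfold alternating
  simp only [mem_Icc, hpred]
  split_ifs <;> (try omega) <;> linarith

theorem cumSum_alternating_sub (n : ℕ) :
    cumSum (Ico 0 ((n : ℤ) + 2)) (fun k => alternating n k - alternating n (k - 1)) =
      alternating n := by
  refine cumSum_sub_sub_one (a := 0) (fun i hi => (mem_Ico.1 hi).1) ?_ fun k hk => ?_
  · rw [alternating, if_neg (by simp)]
  · simp only [alternating, mem_Icc, mem_Ico] at hk ⊢
    rw [if_neg (by omega), if_neg (by omega)]

theorem sum_alternating_sq (n : ℕ) : ∑ k ∈ Ico 0 ((n : ℤ) + 2), alternating n k ^ 2 = n + 1 := by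
  simp only [alternating_sq, sum_ite_mem]
  rw [inter_eq_right.2 (Icc_subset_Ico_right (by omega))]
  simp

theorem sum_alternating_sub_sq (n : ℕ) :
    ∑ k ∈ Ico 0 ((n : ℤ) + 2), (alternating n k - alternating n (k - 1)) ^ 2 = 4 * n + 2 := by
  simp only [alternating_sub_sq, sum_add_distrib, ← mul_sum, sum_ite_mem]
  have hsub : ∀ {a b : ℤ}, 0 ≤ a → b ≤ n + 1 → Icc a b ⊆ Ico 0 ((n : ℤ) + 2) := fun ha hb =>
    (Icc_subset_Icc ha hb).trans (Icc_subset_Ico_right (by omega))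
  rw [inter_eq_right.2 (hsub le_rfl (by omega)), inter_eq_right.2 (hsub zero_le_one le_rfl),
    inter_eq_right.2 (hsub zero_le_one (by omega))]
  simp only [sum_const, Int.card_Icc, sub_zero, Int.toNat_natCast_add_one, nsmul_eq_mul,
    Nat.cast_add, Nat.cast_one, mul_one, add_sub_cancel_right, Int.toNat_natCast]
  ring

theorem exists_finsupp_distQuadForm_eq (n : ℕ) :
    ∃ f : ℤ →₀ ℝ, ∑ i ∈ f.support, f i = 0 ∧ ∑ i ∈ f.support, f i ^ 2 = 1 ∧
      -((n : ℝ) + 1) / (2 * n + 1) = distQuadForm f.support f := by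
  set g : ℤ → ℝ := fun k => alternating n k - alternating n (k - 1)
  have hcum : cumSum (Ico 0 ((n : ℤ) + 2)) g = alternating n := cumSum_alternating_sub n
  have h0 : ∑ k ∈ Ico 0 ((n : ℤ) + 2), g k = 0 := by
    rw [← cumSum_eq_sum (k := n + 1) fun i hi => by have := mem_Ico.1 hi; omega, hcum,
      alternating, if_neg (by simp)]
  obtain ⟨f, hf0, hf1, hf⟩ := exists_finsupp_normalized _ g h0
    (by rw [sum_alternating_sub_sq]; positivity)
  refine ⟨f, hf0, hf1, ?_⟩
  rw [← hf, distQuadForm_eq_neg_two_mul_sum_cumSum_sq Subset.rfl h0, hcum, sum_alternating_sq,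
    sum_alternating_sub_sq]
  field_simp
  ring

open Filter Topology in
theorem tendsto_neg_succ_div_two_mul_succ :
    Tendsto (fun n : ℕ => -((n : ℝ) + 1) / (2 * n + 1)) atTop (𝓝 (-1 / 2)) := by
  have h := (((tendsto_one_div_add_atTop_nhds_zero_nat (𝕜 := ℝ)).const_sub 2).inv₀
    (by norm_num)).neg
  convert h using 2 with n
  · rw [show (2 : ℝ) - 1 / (n + 1) = (2 * n + 1) / (n + 1) by field_simp; ring, inv_div, neg_div]
  · norm_num

/-- `QEC(ℤ) = -1/2`: for the two-sided infinite path graph on `ℤ`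
(distance `d(i,j) = |i-j|`), `-1/2` is the least upper bound of
`∑ᵢ∑ⱼ |i-j| f(i) f(j)` over finitely supported `f : ℤ → ℝ` with
`∑ f = 0` and `∑ f² = 1`. -/
theorem qec_int :
    IsLUB
      {y : ℝ | ∃ f : ℤ →₀ ℝ,
        (∑ i ∈ f.support, f i) = 0 ∧ (∑ i ∈ f.support, (f i) ^ 2) = 1 ∧
        y = ∑ i ∈ f.support, ∑ j ∈ f.support, |(i : ℝ) - (j : ℝ)| * f i * f j}
      (-1 / 2) := by
  refine isLUB_of_mem_closure ?_ (mem_closure_of_tendsto tendsto_neg_succ_div_two_mul_succ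
    (Filter.Eventually.of_forall exists_finsupp_distQuadForm_eq))
  rintro y ⟨f, h0, h1, rfl⟩
  have h := distQuadForm_le_neg_half_sum_sq f.support f h0
  rwa [h1] at h
end

section
/- Let a, b, t ∈ ℝ and let (S_n)_{n≥0} be defined by S_0 = 1, S_1 = a·t + b, and S_n = (1+2t)·S_{n-1} − t²·S_{n-2} for n ≥ 2. Then for every n ≥ 1, S_n = (a·t + b)·∑_{k=0}^{n-1} C(2n−k−1, k)·t^k − ∑_{k=0}^{n-2} C(2n−k−3, k)·t^{k+2}, where C(m,k) denotes the binomial coefficient. -/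
/-!
The polynomials `J` with `J₀ = 0`, `J₁ = 1`, `J_{m+2} = J_{m+1} + t·J_m` have the closed form
`J_{m+1} = ∑_{i+j=m} C(j,i) tⁱ` (Pascal's rule on the antidiagonals, as for Fibonacci numbers).
Applying their recurrence twice shows that the even-indexed ones satisfy
`J_{m+4} = (1+2t)·J_{m+2} − t²·J_m`, the recurrence of `S`; comparing initial values gives
`S_{n+1} = (a·t+b)·J_{2n+2} − t²·J_{2n}`. In `J_{2n}` the terms with `k ≥ n` vanish because
`C(2n−1−k, k) = 0`, which leaves exactly the two sums of the formula.
-/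

def S (a b t : ℝ) : ℕ → ℝ
  | 0 => 1
  | 1 => a * t + b
  | n + 2 => (1 + 2 * t) * S a b t (n + 1) - t ^ 2 * S a b t n

open Finset

section Jacobsthal

variable {R : Type*}

/-- Horadam's Jacobsthal polynomial `J_n(t)`; the Jacobsthal numbers are `J_n(2)`. -/
def jacobsthal [Semiring R] (t : R) : ℕ → R
  | 0 => 0
  | 1 => 1
  | m + 2 => jacobsthal t (m + 1) + t * jacobsthal t m

theorem jacobsthal_add_two [Semiring R] (t : R) (m : ℕ) :
    jacobsthal t (m + 2) = jacobsthal t (m + 1) + t * jacobsthal t m := rfl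

section CommSemiring

variable [CommSemiring R] (t : R)

theorem jacobsthal_succ_eq_sum_choose (m : ℕ) :
    jacobsthal t (m + 1) = ∑ p ∈ antidiagonal m, (p.2.choose p.1 : R) * t ^ p.1 := by
  induction m using Nat.twoStepInduction with
  | zero => simp [jacobsthal]
  | one => simp [jacobsthal, Finset.Nat.antidiagonal_succ]
  | more m h0 h1 =>
    rw [jacobsthal_add_two, h1, h0, Finset.Nat.antidiagonal_succ_succ',
      Finset.Nat.antidiagonal_succ]
    simp only [sum_cons, sum_map, Function.Embedding.coe_prodMap, Function.Embedding.coeFn_mk,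
      Function.Embedding.refl_apply, Prod.map_fst, Prod.map_snd, Nat.succ_eq_add_one]
    simp only [Nat.choose_zero_right, Nat.choose_succ_succ,
      Nat.choose_eq_zero_of_lt (Nat.succ_pos _), Nat.cast_add, Nat.cast_zero, zero_mul, zero_add,
      add_mul, sum_add_distrib, mul_sum, pow_succ', mul_left_comm t]
    abel

theorem jacobsthal_two_mul (n : ℕ) :
    jacobsthal t (2 * n) = ∑ k ∈ range n, ((2 * n - k - 1).choose k : R) * t ^ k := by
  cases n with
  | zero => rfl
  | succ m =>
    rw [show 2 * (m + 1) = 2 * m + 1 + 1 by ring, jacobsthal_succ_eq_sum_choose,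
      Nat.sum_antidiagonal_eq_sum_range_succ (fun i j => (j.choose i : R) * t ^ i),
      show (2 * m + 1).succ = (m + 1) + (m + 1) by omega, sum_range_add]
    have high_terms_vanish : ∑ k ∈ range (m + 1),
        ((2 * m + 1 - (m + 1 + k)).choose (m + 1 + k) : R) * t ^ (m + 1 + k) = 0 :=
      sum_eq_zero fun k _ => by rw [Nat.choose_eq_zero_of_lt (by omega), Nat.cast_zero, zero_mul]
    rw [high_terms_vanish, add_zero]
    refine sum_congr rfl fun k _ => ?_
    rw [show 2 * m + 1 - k = 2 * m + 1 + 1 - k - 1 by omega]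

end CommSemiring

theorem jacobsthal_add_four [CommRing R] (t : R) (m : ℕ) :
    jacobsthal t (m + 4) = (1 + 2 * t) * jacobsthal t (m + 2) - t ^ 2 * jacobsthal t m := by
  have h := jacobsthal_add_two t
  linear_combination h (m + 2) + h (m + 1) - t * h m

end Jacobsthal

theorem S_succ_eq_jacobsthal (a b t : ℝ) (n : ℕ) :
    S a b t (n + 1) =
      (a * t + b) * jacobsthal t (2 * (n + 1)) - t ^ 2 * jacobsthal t (2 * n) := by
  induction n using Nat.twoStepInduction with
  | zero => simp [S, jacobsthal]
  | one =>
    simp only [S, jacobsthal]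
    ring
  | more n h0 h1 =>
    rw [S, h1, h0]
    linear_combination (norm := ring_nf)
      t ^ 2 * jacobsthal_add_four t (2 * n) - (a * t + b) * jacobsthal_add_four t (2 * n + 2)

/-- For `n ≥ 1`,
`Sₙ(a,b;t) = (a·t+b)·∑_{k=0}^{n-1} C(2n−k−1,k) tᵏ − ∑_{k=0}^{n-2} C(2n−k−3,k) t^{k+2}`. -/
theorem S_explicit_formula (a b t : ℝ) (n : ℕ) (hn : 1 ≤ n) :
    S a b t n =
      (a * t + b) * ∑ k ∈ Finset.range n, (Nat.choose (2 * n - k - 1) k : ℝ) * t ^ k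
        - ∑ k ∈ Finset.range (n - 1), (Nat.choose (2 * n - k - 3) k : ℝ) * t ^ (k + 2) := by
  obtain ⟨m, rfl⟩ := Nat.exists_eq_add_of_le' hn
  rw [S_succ_eq_jacobsthal, ← jacobsthal_two_mul t, Nat.add_sub_cancel, jacobsthal_two_mul t m,
    mul_sum]
  congr 2 with k
  rw [show 2 * (m + 1) - k - 3 = 2 * m - k - 1 by omega]
  ring
end

section
/- For t ∈ ℝ and n ≥ 0 define W_n(t) := ∑_{k=0}^{n} C(2n−k+1, k)·t^k. Then for every n ≥ 0 and every real t: W_n(t) = S_n(2,1;t) and W_n(t) = S_n(1, t+1; t), where S_n(a,b;t) is defined by the recurrence S_0(a,b;t) = 1, S_1(a,b;t) = a·t + b, S_n(a,b;t) = (1+2t)·S_{n-1}(a,b;t) − t²·S_{n-2}(a,b;t). (In the second equality the parameter b is set equal to t+1 for the same value of t at which the sequence is evaluated.) -/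
/-- `Wₙ(t) := ∑_{k=0}^{n} C(2n−k+1, k)·tᵏ`. -/
def W (t : ℝ) (n : ℕ) : ℝ :=
  ∑ k ∈ Finset.range (n + 1), (Nat.choose (2 * n - k + 1) k : ℝ) * t ^ k

/-!
Write `F_m(t) = ∑_{i+j=m} C(i,j) tʲ`, so that `Wₙ(t) = F_{2n+1}(t)` (the terms with `k > n` vanish).
Pascal's rule gives `F_{m+2} = F_{m+1} + t F_m`, and using it twice,
`F_{m+4} = (1+2t) F_{m+2} − t² F_m`. Hence `W` satisfies the recurrence defining `S`, with the
initial values `1` and `2t + 1 = 1·t + (t+1)` of both parameter choices.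
-/

open Finset

def fibPoly {R : Type*} [CommSemiring R] (t : R) (m : ℕ) : R :=
  ∑ p ∈ antidiagonal m, (p.1.choose p.2 : R) * t ^ p.2

section fibPoly

variable {R : Type*}

theorem fibPoly_succ [CommSemiring R] (t : R) (m : ℕ) :
    fibPoly t (m + 1) = 1 + ∑ p ∈ antidiagonal m, (p.1.choose (p.2 + 1) : R) * t ^ (p.2 + 1) := by
  simp [fibPoly, Nat.sum_antidiagonal_succ']

theorem fibPoly_add_two [CommSemiring R] (t : R) (m : ℕ) :
    fibPoly t (m + 2) = fibPoly t (m + 1) + t * fibPoly t m := by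
  rw [fibPoly_succ, Nat.sum_antidiagonal_succ, fibPoly_succ, fibPoly, mul_sum]
  simp only [Nat.choose_zero_succ, Nat.cast_zero, zero_mul, zero_add]
  rw [add_assoc, ← sum_add_distrib]
  refine congrArg _ (sum_congr rfl fun p _ => ?_)
  rw [Nat.choose_succ_succ', Nat.cast_add]
  ring

theorem fibPoly_add_four [CommRing R] (t : R) (m : ℕ) :
    fibPoly t (m + 4) = (1 + 2 * t) * fibPoly t (m + 2) - t ^ 2 * fibPoly t m := by
  rw [fibPoly_add_two, fibPoly_add_two t (m + 1), fibPoly_add_two t m]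
  ring

theorem fibPoly_eq_sum_range [CommSemiring R] (t : R) (m : ℕ) :
    fibPoly t m = ∑ k ∈ range (m + 1), ((m - k).choose k : R) * t ^ k := by
  rw [fibPoly, ← Nat.sum_antidiagonal_swap, Nat.sum_antidiagonal_eq_sum_range_succ_mk]
  rfl

end fibPoly

theorem W_eq_fibPoly (t : ℝ) (n : ℕ) : W t n = fibPoly t (2 * n + 1) := by
  rw [fibPoly_eq_sum_range, W]
  refine sum_subset_zero_on_sdiff (range_subset_range.2 (by omega)) (fun k hk => ?_)
    (fun k hk => ?_)
  · simp only [mem_sdiff, mem_range] at hk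
    rw [Nat.choose_eq_zero_of_lt (by omega), Nat.cast_zero, zero_mul]
  · rw [mem_range] at hk
    rw [show 2 * n - k + 1 = 2 * n + 1 - k by omega]

theorem W_add_two (t : ℝ) (n : ℕ) :
    W t (n + 2) = (1 + 2 * t) * W t (n + 1) - t ^ 2 * W t n := by
  simp only [W_eq_fibPoly, show 2 * (n + 2) + 1 = 2 * n + 1 + 4 by ring,
    show 2 * (n + 1) + 1 = 2 * n + 1 + 2 by ring, fibPoly_add_four]

theorem eq_S_of_recurrence {a b t : ℝ} {u : ℕ → ℝ} (h0 : u 0 = 1) (h1 : u 1 = a * t + b)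
    (h : ∀ n, u (n + 2) = (1 + 2 * t) * u (n + 1) - t ^ 2 * u n) (n : ℕ) : u n = S a b t n := by
  induction n using Nat.twoStepInduction with
  | zero => exact h0
  | one => exact h1
  | more n ih0 ih1 => rw [h, ih0, ih1, S]

/-- `Wₙ(t) = Sₙ(2,1;t) = Sₙ(1,t+1;t)`. -/
theorem W_eq_S (t : ℝ) (n : ℕ) :
    W t n = S 2 1 t n ∧ W t n = S 1 (t + 1) t n := by
  have h0 : W t 0 = 1 := by simp [W]
  have h1 : W t 1 = 2 * t + 1 := by simp [W, sum_range_succ]; ring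
  exact ⟨eq_S_of_recurrence h0 h1 (W_add_two t) n,
    eq_S_of_recurrence h0 (by rw [h1]; ring) (W_add_two t) n⟩
end

section
/- For every integer n ≥ 1 and every real t, (1/(n+1))·S_n(2,1;t) = ∏_{k=1}^{n} ( t + 1/(2 + 2·cos(kπ/(n+1))) ), where S_n(2,1;t) is defined by the recurrence S_0 = 1, S_1 = 2t + 1, S_m = (1+2t)·S_{m-1} − t²·S_{m-2}. -/
/-!
For `t ≠ 0` the substitution `Sₙ = (-t)ⁿ Vₙ` turns the recurrence into that of the Chebyshev
polynomials of the second kind at `x = -(1 + 2t)/(2t)`, so `Sₙ(2,1;t) = (-t)ⁿ Uₙ(x)`. Since `Uₙ`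
has leading coefficient `2ⁿ` and roots `cₖ = cos (kπ/(n+1))`, this factors as
`∏ₖ (1 + 2t + 2t cₖ)`. Evaluating `Uₙ(-1) = (-1)ⁿ (n+1)` gives `∏ₖ (2 + 2cₖ) = n + 1`, and
dividing factor by factor yields the claim.
-/

open Real

open Polynomial

namespace Polynomial.Chebyshev

theorem U_real_eval_eq_prod (n : ℕ) (x : ℝ) :
    (U ℝ n).eval x = 2 ^ n * ∏ k ∈ Finset.Icc 1 n, (x - cos (k * π / (n + 1))) := by
  have hinj : Set.InjOn (fun k : ℕ ↦ cos ((k + 1) * π / (n + 1))) (Finset.range n) :=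
    (Finset.range n).nodup_map_iff_injOn.mp (roots_U_real_nodup n)
  have hcard : (U ℝ n).roots.card = (U ℝ n).natDegree := by
    rw [roots_U_real, Finset.card_val, Finset.card_image_of_injOn hinj, Finset.card_range,
      natDegree_U_natCast]
  conv_lhs => rw [← C_leadingCoeff_mul_prod_multiset_X_sub_C hcard]
  rw [eval_mul, eval_C, leadingCoeff_U_natCast, eval_multiset_prod, roots_U_real,
    Multiset.map_map]
  congr 1
  change ∏ r ∈ _, _ = _
  rw [Finset.prod_image hinj, ← Finset.Ico_add_one_right_eq_Icc, Finset.prod_Ico_eq_prod_range,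
    Nat.add_sub_cancel]
  refine Finset.prod_congr rfl fun k _ ↦ ?_
  simp [add_comm]

end Polynomial.Chebyshev

theorem pow_mul_prod_Icc_one {M : Type*} [CommMonoid M] (n : ℕ) (b : M) (f : ℕ → M) :
    b ^ n * ∏ k ∈ Finset.Icc 1 n, f k = ∏ k ∈ Finset.Icc 1 n, b * f k := by
  simpa using Finset.pow_card_mul_prod (s := Finset.Icc 1 n) (f := f) (b := b)

theorem prod_two_add_two_cos (n : ℕ) :
    ∏ k ∈ Finset.Icc 1 n, (2 + 2 * cos (k * π / (n + 1))) = n + 1 := by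
  have h := Chebyshev.U_eval_neg_one ℝ n
  rw [Chebyshev.U_real_eval_eq_prod, Int.cast_negOnePow_natCast] at h
  calc ∏ k ∈ Finset.Icc 1 n, (2 + 2 * cos (k * π / (n + 1)))
      = (-1) ^ n * (2 ^ n * ∏ k ∈ Finset.Icc 1 n, (-1 - cos (k * π / (n + 1)))) := by
        rw [← mul_assoc, ← mul_pow, pow_mul_prod_Icc_one]
        exact Finset.prod_congr rfl fun k _ ↦ by ring
    _ = n + 1 := by rw [h, ← mul_assoc, ← mul_pow]; push_cast; ring

theorem S_at_zero (a : ℝ) : ∀ n, S a 1 0 n = 1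
  | 0 => rfl
  | 1 => by simp [S]
  | n + 2 => by simp [S, S_at_zero a (n + 1)]

theorem S_two_one_eq_U_eval {t : ℝ} (ht : t ≠ 0) :
    ∀ n : ℕ, S 2 1 t n = (-t) ^ n * (Chebyshev.U ℝ n).eval (-(1 + 2 * t) / (2 * t))
  | 0 => by simp [S]
  | 1 => by
    rw [S, Nat.cast_one, Chebyshev.U_one, eval_mul, eval_ofNat, eval_X]
    field_simp
    ring
  | n + 2 => by
    rw [S, S_two_one_eq_U_eval ht (n + 1), S_two_one_eq_U_eval ht n]
    push_cast
    rw [Chebyshev.U_add_two]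
    simp only [eval_sub, eval_mul, eval_ofNat, eval_X]
    field_simp
    ring

theorem S_two_one_eq_prod (n : ℕ) (t : ℝ) :
    S 2 1 t n = ∏ k ∈ Finset.Icc 1 n, (1 + 2 * t + 2 * t * cos (k * π / (n + 1))) := by
  rcases eq_or_ne t 0 with rfl | ht
  · simp [S_at_zero]
  rw [S_two_one_eq_U_eval ht, Chebyshev.U_real_eval_eq_prod, ← mul_assoc, ← mul_pow,
    pow_mul_prod_Icc_one]
  refine Finset.prod_congr rfl fun k _ ↦ ?_
  field_simp
  ring

theorem S_two_one_roots_general (n : ℕ) (t : ℝ) :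
    (1 / (n + 1 : ℝ)) * S 2 1 t n =
      ∏ k ∈ Finset.Icc 1 n, (t + 1 / (2 + 2 * Real.cos ((k : ℝ) * π / (n + 1)))) := by
  have hprod := prod_two_add_two_cos n
  have hne : ∀ k ∈ Finset.Icc 1 n, 2 + 2 * cos (k * π / (n + 1)) ≠ 0 :=
    Finset.prod_ne_zero_iff.mp (by rw [hprod]; positivity)
  calc (1 / (n + 1 : ℝ)) * S 2 1 t n
      = ∏ k ∈ Finset.Icc 1 n,
          (1 + 2 * t + 2 * t * cos (k * π / (n + 1))) / (2 + 2 * cos (k * π / (n + 1))) := by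
        rw [Finset.prod_div_distrib, ← S_two_one_eq_prod, hprod, one_div_mul_eq_div]
    _ = ∏ k ∈ Finset.Icc 1 n, (t + 1 / (2 + 2 * cos (k * π / (n + 1)))) :=
        Finset.prod_congr rfl fun k hk ↦ by
          rw [div_eq_iff (hne k hk), add_mul, one_div_mul_cancel (hne k hk)]
          ring

/-- `(1/(n+1))·Sₙ(2,1;t) = ∏_{k=1}^{n} (t + 1/(2 + 2 cos(kπ/(n+1))))`. -/
theorem S_two_one_roots (n : ℕ) (hn : 1 ≤ n) (t : ℝ) :
    (1 / (n + 1 : ℝ)) * S 2 1 t n =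
      ∏ k ∈ Finset.Icc 1 n, (t + 1 / (2 + 2 * Real.cos ((k : ℝ) * π / (n + 1)))) :=
  S_two_one_roots_general n t
end

section
/- For every integer n ≥ 1 and every real t, S_n(1, 1/2; t) = ∏_{k=1}^{n} ( t + 1/(2 + 2·cos((2k−1)π/(2n))) ), where S_n(1,1/2;t) is defined by the recurrence S_0 = 1, S_1 = t + 1/2, S_m = (1+2t)·S_{m-1} − t²·S_{m-2}. -/
/-!
Substituting `t = -1 / (2 + 2 cos θ)` turns the recurrence for `S n` into the recurrence
`cos ((n + 2) θ) = 2 cos θ · cos ((n + 1) θ) - cos (n θ)`, so that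
`S n t = cos (n θ) / (2 + 2 cos θ) ^ n`. The `n` angles `θ = (2k - 1)π / (2n) ∈ (0, π)` thus give
`n` distinct zeros of `S n`, which is a monic polynomial of degree `n` in `t`, hence the
product of the corresponding linear factors.
-/

open Real

open Polynomial

theorem Polynomial.Monic.eq_prod_X_sub_C_of_eval_eq_zero {R : Type*} [CommRing R] [IsDomain R]
    {p : R[X]} (hp : p.Monic) {s : Finset R} (hdeg : p.natDegree ≤ s.card)
    (hs : ∀ x ∈ s, p.eval x = 0) : p = ∏ x ∈ s, (X - C x) := by
  refine eq_of_monic_of_dvd_of_natDegree_le (monic_prod_X_sub_C _ _) hp ?_ ?_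
  · refine (Multiset.prod_X_sub_C_dvd_iff_le_roots hp.ne_zero s.val).mpr
      ((Multiset.le_iff_subset s.nodup).mpr fun x hx => ?_)
    exact (mem_roots hp.ne_zero).mpr (hs x hx)
  · simpa [natDegree_prod_of_monic, fun x => monic_X_sub_C x] using hdeg

section SPoly

variable {R : Type*} [CommRing R]

noncomputable def SPoly (a b : R) : ℕ → R[X]
  | 0 => 1
  | 1 => C a * X + C b
  | n + 2 => (1 + 2 * X) * SPoly a b (n + 1) - X ^ 2 * SPoly a b n

theorem eval_SPoly (a b t : ℝ) : ∀ n : ℕ, (SPoly a b n).eval t = S a b t n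
  | 0 => by simp [SPoly, S]
  | 1 => by simp [SPoly, S]
  | n + 2 => by simp [SPoly, S, eval_SPoly a b t (n + 1), eval_SPoly a b t n]

theorem natDegree_SPoly_le (a b : R) : ∀ n : ℕ, (SPoly a b n).natDegree ≤ n
  | 0 => by simp [SPoly]
  | 1 => by rw [SPoly]; compute_degree
  | n + 2 => by
    have h₁ := natDegree_SPoly_le a b (n + 1)
    have h₀ := natDegree_SPoly_le a b n
    rw [SPoly]
    refine (natDegree_sub_le _ _).trans (max_le ?_ ?_)
    · refine natDegree_mul_le.trans ?_
      have : (1 + 2 * X : R[X]).natDegree ≤ 1 := by compute_degree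
      omega
    · refine natDegree_mul_le.trans ?_
      have := natDegree_X_pow_le (R := R) 2
      omega

theorem coeff_SPoly_self (a b : R) : ∀ n : ℕ, (SPoly a b n).coeff n = 1 + n * (a - 1)
  | 0 => by simp [SPoly]
  | 1 => by simp [SPoly]
  | n + 2 => by
    have hvanish : (SPoly a b (n + 1)).coeff (n + 2) = 0 :=
      coeff_eq_zero_of_natDegree_lt ((natDegree_SPoly_le a b _).trans_lt (by omega))
    rw [SPoly, coeff_sub, add_mul, one_mul, mul_assoc, coeff_add, coeff_ofNat_mul, coeff_X_mul,
      coeff_X_pow_mul, hvanish, coeff_SPoly_self a b (n + 1), coeff_SPoly_self a b n]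
    push_cast
    ring

theorem monic_SPoly_one (b : R) (n : ℕ) : (SPoly 1 b n).Monic :=
  monic_of_natDegree_le_of_coeff_eq_one n (natDegree_SPoly_le 1 b n) (by simp [coeff_SPoly_self])

end SPoly

theorem S_one_half_neg_inv_two_add_two_cos {θ : ℝ} (hθ : 2 + 2 * cos θ ≠ 0) :
    ∀ n : ℕ, S 1 (1 / 2) (-(1 / (2 + 2 * cos θ))) n = cos (n * θ) / (2 + 2 * cos θ) ^ n
  | 0 => by simp [S]
  | 1 => by
    have : 1 + cos θ ≠ 0 := fun h => hθ (by linarith)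
    simp only [S, Nat.cast_one, one_mul, pow_one]
    field_simp
    ring
  | n + 2 => by
    have hcos : cos ((n + 2 : ℕ) * θ) = 2 * cos θ * cos ((n + 1 : ℕ) * θ) - cos (n * θ) := by
      have := cos_add_cos ((n + 2 : ℕ) * θ) (n * θ)
      rw [show ((n + 2 : ℕ) * θ + n * θ) / 2 = (n + 1 : ℕ) * θ by push_cast; ring,
        show ((n + 2 : ℕ) * θ - n * θ) / 2 = θ by push_cast; ring] at this
      linarith
    rw [S, S_one_half_neg_inv_two_add_two_cos hθ (n + 1), S_one_half_neg_inv_two_add_two_cos hθ n,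
      hcos]
    have : 1 + cos θ ≠ 0 := fun h => hθ (by linarith)
    field_simp
    ring

-- `cos (chebyshevAngle n k)`, `k = 1, …, n`, are the zeros of the Chebyshev polynomial `Tₙ`.
noncomputable def chebyshevAngle (n k : ℕ) : ℝ := (2 * k - 1) * π / (2 * n)

theorem chebyshevAngle_mem_Ioo {n k : ℕ} (hk : k ∈ Finset.Icc 1 n) :
    chebyshevAngle n k ∈ Set.Ioo 0 π := by
  obtain ⟨hk₁, hkn⟩ := Finset.mem_Icc.mp hk
  have hk₁' : (1 : ℝ) ≤ k := by exact_mod_cast hk₁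
  have hkn' : (k : ℝ) ≤ n := by exact_mod_cast hkn
  have hn : (0 : ℝ) < n := by linarith
  unfold chebyshevAngle
  constructor
  · exact div_pos (mul_pos (by linarith) pi_pos) (by positivity)
  · rw [div_lt_iff₀ (by positivity)]
    nlinarith [pi_pos]

theorem cos_mul_chebyshevAngle {n : ℕ} (hn : n ≠ 0) (k : ℕ) :
    cos (n * chebyshevAngle n k) = 0 := by
  rw [cos_eq_zero_iff]
  refine ⟨k - 1, ?_⟩
  unfold chebyshevAngle
  field_simp
  push_cast
  ring

theorem chebyshevAngle_injective {n : ℕ} (hn : n ≠ 0) : Function.Injective (chebyshevAngle n) := by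
  intro j k h
  unfold chebyshevAngle at h
  rw [div_left_inj' (by positivity), mul_left_inj' pi_ne_zero] at h
  exact_mod_cast (by linarith : (j : ℝ) = k)

theorem two_add_two_cos_pos {θ : ℝ} (hθ : θ ∈ Set.Ioo 0 π) : 0 < 2 + 2 * cos θ := by
  have := cos_lt_cos_of_nonneg_of_le_pi hθ.1.le le_rfl hθ.2
  rw [cos_pi] at this
  linarith

theorem injOn_neg_inv_two_add_two_cos :
    Set.InjOn (fun θ => -(1 / (2 + 2 * cos θ))) (Set.Ioo 0 π) := by
  intro x hx y hy h
  simp only [neg_inj, one_div, inv_inj, add_right_inj, mul_eq_mul_left_iff, two_ne_zero,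
    or_false] at h
  exact injOn_cos (Set.Ioo_subset_Icc_self hx) (Set.Ioo_subset_Icc_self hy) h

/-- `Sₙ(1,1/2;t) = ∏_{k=1}^{n} (t + 1/(2 + 2 cos((2k−1)π/(2n))))`. -/
theorem S_one_half_roots (n : ℕ) (hn : 1 ≤ n) (t : ℝ) :
    S 1 (1 / 2) t n =
      ∏ k ∈ Finset.Icc 1 n,
        (t + 1 / (2 + 2 * Real.cos ((2 * (k : ℝ) - 1) * π / (2 * n)))) := by
  have hn₀ : n ≠ 0 := by omega
  set r : ℕ → ℝ := fun k => -(1 / (2 + 2 * cos (chebyshevAngle n k)))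
  have hr : Set.InjOn r (Finset.Icc 1 n) :=
    injOn_neg_inv_two_add_two_cos.comp (chebyshevAngle_injective hn₀).injOn
      fun k hk => chebyshevAngle_mem_Ioo hk
  have hroot : ∀ x ∈ (Finset.Icc 1 n).image r, (SPoly 1 (1 / 2) n).eval x = 0 := by
    intro x hx
    obtain ⟨k, hk, rfl⟩ := Finset.mem_image.mp hx
    rw [eval_SPoly, S_one_half_neg_inv_two_add_two_cos (two_add_two_cos_pos
      (chebyshevAngle_mem_Ioo hk)).ne', cos_mul_chebyshevAngle hn₀, zero_div]
  have hfactor : SPoly 1 (1 / 2) n = ∏ x ∈ (Finset.Icc 1 n).image r, (X - C x) := by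
    refine (monic_SPoly_one _ n).eq_prod_X_sub_C_of_eval_eq_zero ?_ hroot
    rw [Finset.card_image_of_injOn hr, Nat.card_Icc, Nat.add_sub_cancel]
    exact natDegree_SPoly_le _ _ n
  rw [← eval_SPoly, hfactor, Finset.prod_image hr, eval_prod]
  simp [r, chebyshevAngle]
end

section
/- For all real numbers a, b, t and every integer n ≥ 1, S_n(2,1;t)·S_n(a,b;t) − S_{n-1}(2,1;t)·S_{n+1}(a,b;t) = t^{2n}, where both sequences are defined by the recurrence S_0(a,b;t) = 1, S_1(a,b;t) = a·t + b, S_m(a,b;t) = (1+2t)·S_{m-1}(a,b;t) − t²·S_{m-2}(a,b;t). -/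
section Casoratian

variable {R : Type*} [CommRing R]

def casoratian (x y : ℕ → R) (n : ℕ) : R :=
  x (n + 1) * y n - x n * y (n + 1)

variable {p q : R} {x y : ℕ → R}

theorem casoratian_succ (hx : ∀ n, x (n + 2) = p * x (n + 1) - q * x n)
    (hy : ∀ n, y (n + 2) = p * y (n + 1) - q * y n) (n : ℕ) :
    casoratian x y (n + 1) = q * casoratian x y n := by
  simp only [casoratian, hx, hy]
  ring

theorem casoratian_eq_pow_mul (hx : ∀ n, x (n + 2) = p * x (n + 1) - q * x n)
    (hy : ∀ n, y (n + 2) = p * y (n + 1) - q * y n) (n : ℕ) :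
    casoratian x y n = q ^ n * casoratian x y 0 := by
  induction n with
  | zero => rw [pow_zero, one_mul]
  | succ n ih => rw [casoratian_succ hx hy, ih, pow_succ', mul_assoc]

end Casoratian

theorem S_add_two (a b t : ℝ) (n : ℕ) :
    S a b t (n + 2) = (1 + 2 * t) * S a b t (n + 1) - t ^ 2 * S a b t n :=
  rfl

/-- For `n ≥ 1`: `Sₙ(2,1;t)·Sₙ(a,b;t) − Sₙ₋₁(2,1;t)·Sₙ₊₁(a,b;t) = t^{2n}`. -/
theorem S_determinant_identity (a b t : ℝ) (n : ℕ) (hn : 1 ≤ n) :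
    S 2 1 t n * S a b t n - S 2 1 t (n - 1) * S a b t (n + 1) = t ^ (2 * n) := by
  obtain ⟨m, rfl⟩ := Nat.exists_eq_add_of_le' hn
  have hinit : casoratian (S 2 1 t) (fun k ↦ S a b t (k + 1)) 0 = t ^ 2 := by
    simp only [casoratian, S]
    ring
  have hcas := casoratian_eq_pow_mul (y := fun k ↦ S a b t (k + 1))
    (S_add_two 2 1 t) (fun k ↦ S_add_two a b t (k + 1)) m
  rw [hinit, ← pow_mul] at hcas
  rw [Nat.add_sub_cancel, mul_add_one, pow_add, ← hcas]
  rfl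
end

section
/- For all real numbers s, t and every integer n ≥ 1, the determinant of the n×n real matrix A_n(s,t) with (i,j) entry min{i,j} + s + t·δ_{ij} (indices i,j running over 1,…,n, δ the Kronecker delta) equals S_n(1, s+1; t), the value of the sequence defined by S_0 = 1, S_1 = t + s + 1, S_m = (1+2t)·S_{m-1} − t²·S_{m-2}. -/
/-!
Subtracting from every row of `Aₙ(s,t)` the previous one, and then doing the same with the
columns, leaves the determinant unchanged and produces a tridiagonal matrix: the mixed second
difference of `min{i,j}` is `δᵢⱼ`, that of the constant `s` survives only in the corner, and that
of `t·δᵢⱼ` is `t` times the discrete Laplacian. So the diagonal is `1 + s + t, 1 + 2t, …, 1 + 2t`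
with `-t` beside it, and expanding along the last row gives the recurrence defining
`Sₙ(1, s+1; t)`.
-/

open Matrix

/-- The `n×n` matrix `Aₙ(s,t)` with `(i,j)` entry `min{i,j} + s + t·δᵢⱼ`
(indices `1,…,n`). -/
def A (n : ℕ) (s t : ℝ) : Matrix (Fin n) (Fin n) ℝ :=
  Matrix.of fun i j =>
    ((min (i.1 + 1) (j.1 + 1) : ℕ) : ℝ) + s + if i = j then t else 0

def leadingBlock {α : Type*} (f : ℕ → ℕ → α) (n : ℕ) : Matrix (Fin n) (Fin n) α :=
  of fun i j => f i j

def rowDiff {α : Type*} [Sub α] (f : ℕ → ℕ → α) : ℕ → ℕ → α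
  | 0, j => f 0 j
  | i + 1, j => f (i + 1) j - f i j

def colDiff {α : Type*} [Sub α] (f : ℕ → ℕ → α) : ℕ → ℕ → α
  | i, 0 => f i 0
  | i, j + 1 => f i (j + 1) - f i j

section LeadingBlock

variable {R : Type*} [CommRing R]

theorem det_leadingBlock_rowDiff (f : ℕ → ℕ → R) (n : ℕ) :
    (leadingBlock (rowDiff f) (n + 1)).det = (leadingBlock f (n + 1)).det :=
  .symm <| det_eq_of_forall_row_eq_smul_add_pred (fun _ => 1) (fun _ => rfl) fun i j => by
    simp [leadingBlock, rowDiff]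

theorem det_leadingBlock_colDiff (f : ℕ → ℕ → R) (n : ℕ) :
    (leadingBlock (colDiff f) (n + 1)).det = (leadingBlock f (n + 1)).det :=
  .symm <| det_eq_of_forall_col_eq_smul_add_pred (fun _ => 1) (fun _ => rfl) fun i j => by
    simp [leadingBlock, colDiff]

theorem det_leadingBlock_add_two_of_tridiagonal {f : ℕ → ℕ → R}
    (hf : ∀ i j, i + 1 < j ∨ j + 1 < i → f i j = 0) (n : ℕ) :
    (leadingBlock f (n + 2)).det = f (n + 1) (n + 1) * (leadingBlock f (n + 1)).det
      - f (n + 1) n * f n (n + 1) * (leadingBlock f n).det := by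
  -- the last column of this minor vanishes except for `f n (n + 1)` in its bottom corner
  have hminor : ((leadingBlock f (n + 2)).submatrix (Fin.last (n + 1)).succAbove
      (Fin.last n).castSucc.succAbove).det = f n (n + 1) * (leadingBlock f n).det := by
    have hlast : (Fin.last n).castSucc.succAbove (Fin.last n) = Fin.last (n + 1) := by
      rw [Fin.succAbove_castSucc_self, Fin.succ_last]
    have hcol : ∀ i : Fin n, f i (n + 1) = 0 := fun i => hf _ _ (Or.inl (by simp))
    have hsub : ((leadingBlock f (n + 2)).submatrix (Fin.last (n + 1)).succAbove
        (Fin.last n).castSucc.succAbove).submatrix (Fin.last n).succAbove (Fin.last n).succAbove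
        = leadingBlock f n := by
      ext i j
      simp [leadingBlock, Fin.succAbove_of_castSucc_lt _ _
        (Fin.castSucc_lt_castSucc_iff.2 j.castSucc_lt_last)]
    rw [det_succ_column _ (Fin.last n), Fin.sum_univ_castSucc, hsub]
    simp only [submatrix_apply, Fin.succAbove_last, leadingBlock, of_apply, Fin.val_castSucc,
      hlast, Fin.val_last, hcol, mul_zero, zero_mul, Finset.sum_const_zero, zero_add, ← two_mul,
      pow_mul, neg_one_sq, one_pow, one_mul]
  have hrow : ∀ j : Fin n, f (n + 1) j = 0 := fun j => hf _ _ (Or.inr (by simp))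
  have hsub : (leadingBlock f (n + 2)).submatrix (Fin.last (n + 1)).succAbove
      (Fin.last (n + 1)).succAbove = leadingBlock f (n + 1) := by
    ext i j
    simp [leadingBlock]
  rw [det_succ_row _ (Fin.last (n + 1)), Fin.sum_univ_castSucc, Fin.sum_univ_castSucc, hminor,
    hsub]
  simp only [leadingBlock, of_apply, Fin.val_last, Fin.val_castSucc, hrow, mul_zero, zero_mul,
    Finset.sum_const_zero, zero_add]
  rw [Odd.neg_one_pow ⟨n, by ring⟩, Even.neg_one_pow ⟨n + 1, rfl⟩]
  ring

end LeadingBlock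

def minEntry (s t : ℝ) (i j : ℕ) : ℝ :=
  ((min (i + 1) (j + 1) : ℕ) : ℝ) + s + if i = j then t else 0

def tridiagEntry (s t : ℝ) (i j : ℕ) : ℝ :=
  if i = j then (if i = 0 then 1 + s + t else 1 + 2 * t)
  else if i = j + 1 ∨ j = i + 1 then -t else 0

theorem A_eq_leadingBlock_minEntry (n : ℕ) (s t : ℝ) :
    A n s t = leadingBlock (minEntry s t) n := by
  ext i j
  simp [A, leadingBlock, minEntry, Fin.val_inj]

theorem colDiff_rowDiff_minEntry (s t : ℝ) :
    colDiff (rowDiff (minEntry s t)) = tridiagEntry s t := by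
  funext i j
  rcases i with _ | i <;> rcases j with _ | j <;>
    simp only [colDiff, rowDiff, minEntry, tridiagEntry, Nat.min_def] <;>
    split_ifs <;> subst_vars <;> first | omega | (push_cast; ring1) | simp_all

theorem det_leadingBlock_tridiagEntry (s t : ℝ) (n : ℕ) :
    (leadingBlock (tridiagEntry s t) n).det = S 1 (s + 1) t n := by
  induction n using Nat.twoStepInduction with
  | zero => simp [S]
  | one => simp [leadingBlock, tridiagEntry, S]; ring
  | more n ih₀ ih₁ =>
    have htri : ∀ i j, i + 1 < j ∨ j + 1 < i → tridiagEntry s t i j = 0 := by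
      intro i j h
      simp only [tridiagEntry]
      rw [if_neg (by omega), if_neg (by omega)]
    have hdiag : tridiagEntry s t (n + 1) (n + 1) = 1 + 2 * t := by simp [tridiagEntry]
    have hoff : tridiagEntry s t (n + 1) n * tridiagEntry s t n (n + 1) = t ^ 2 := by
      simp [tridiagEntry, sq]
    rw [det_leadingBlock_add_two_of_tridiagonal htri, ih₀, ih₁, hdiag, hoff, S]

/-- `det Aₙ(s,t) = Sₙ(1,s+1;t)`. -/
theorem det_A (s t : ℝ) (n : ℕ) (hn : 1 ≤ n) :
    (A n s t).det = S 1 (s + 1) t n := by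
  obtain ⟨m, rfl⟩ := Nat.exists_eq_add_of_le' hn
  rw [A_eq_leadingBlock_minEntry, ← det_leadingBlock_rowDiff, ← det_leadingBlock_colDiff,
    colDiff_rowDiff_minEntry, det_leadingBlock_tridiagEntry]
end

section
/- Let s, t ∈ ℝ and let n ≥ 2 be an integer. The n×n real symmetric matrix A_n(s,t) with (i,j) entry min{i,j} + s + t·δ_{ij} (indices 1,…,n) is positive semidefinite if and only if t > -1/(2 + 2·cos(π/n)) and S_n(1, s+1; t) ≥ 0, where S_n(1,s+1;t) is the value of the sequence defined by S_0 = 1, S_1 = t + s + 1, S_m = (1+2t)·S_{m-1} − t²·S_{m-2}. -/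
open Real

/-!
Let `L` be the lower triangular all-ones matrix. Taking mixed second differences of the entries of
`A_n(s,t)` gives `A_n(s,t) = L B Lᵀ`, where `B` is symmetric tridiagonal with diagonal
`(1+s+t, 1+2t, …, 1+2t)` and off-diagonal entries `-t`. Expanding along the last row, the leading
principal minors of `B` obey the recurrence of `S`, so `det B = S_n(1,s+1;t)`.

The lower right `(n-1)×(n-1)` block `T` of `B` has quadratic form `(1+2t)∑yᵢ² - 2t∑yᵢyᵢ₊₁`, and
`|∑yᵢyᵢ₊₁| ≤ cos(π/n) ∑yᵢ²` (AM-GM on each product, weighted by the positive eigenvector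
`(sin(jπ/n))ⱼ` of the path), so `T` is positive definite when `t > -1/(2+2cos(π/n))`; then, by the
Schur complement, `B` is positive semidefinite iff `det B ≥ 0`. When `t ≤ -1/(2+2cos(π/n))`, the
vector `x = ((-1)ʲ sin(jπ/n))ⱼ` has `xᵀBx = (1 + t(2+2cos(π/n)))‖x‖² ≤ 0` but
`(Bx)₀ = t sin(π/n) ≠ 0`, so `B` is not positive semidefinite.
-/

open Matrix Finset

lemma sum_ite_le_eq_sum_range {M : Type*} [AddCommMonoid M] {n : ℕ} (f : ℕ → M) (i : Fin n) :
    ∑ p : Fin n, (if p ≤ i then f p else 0) = ∑ p ∈ range (i + 1), f p := by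
  simp only [Fin.le_iff_val_le_val]
  rw [Fin.sum_univ_eq_sum_range (fun p => if p ≤ i then f p else 0), ← sum_filter]
  congr 1
  ext p
  simp only [mem_filter, mem_range]
  omega

lemma sum_range_sum_range_sub {M : Type*} [AddCommGroup M] (F : ℕ → ℕ → M) (P Q : ℕ) :
    ∑ p ∈ range P, ∑ q ∈ range Q, (F (p + 1) (q + 1) - F p (q + 1) - F (p + 1) q + F p q) =
      F P Q - F 0 Q - F P 0 + F 0 0 := by
  have hinner (p : ℕ) : ∑ q ∈ range Q, (F (p + 1) (q + 1) - F p (q + 1) - F (p + 1) q + F p q) =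
      (F (p + 1) Q - F p Q) - (F (p + 1) 0 - F p 0) := by
    rw [← sum_range_sub (fun q => F (p + 1) q - F p q)]
    exact sum_congr rfl fun q _ => by abel
  simp only [hinner, sum_sub_distrib, sum_range_sub (fun p => F p Q),
    sum_range_sub (fun p => F p 0)]
  abel

lemma sum_range_succ_eq_sum_range_of_eq {M : Type*} [AddCommGroup M] (f : ℕ → M) {m : ℕ}
    (h : f 0 = f m) :
    ∑ i ∈ range m, f (i + 1) = ∑ i ∈ range m, f i := by
  have := (sum_range_succ' f m).symm.trans (sum_range_succ f m)
  rwa [h, add_left_inj] at this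

section Tridiagonal

variable {R : Type*}

def tridiagonal [Zero R] (n : ℕ) (d : ℕ → R) (e : R) : Matrix (Fin n) (Fin n) R :=
  of fun i j => if i = j then d i else if i.1 + 1 = j ∨ j.1 + 1 = i then e else 0

section Zero

variable [Zero R] {n : ℕ} (d : ℕ → R) (e : R)

lemma tridiagonal_apply_self (i : Fin n) : tridiagonal n d e i i = d i := by
  simp [tridiagonal]

lemma tridiagonal_apply_of_succ_eq {i j : Fin n} (h : i.1 + 1 = j ∨ j.1 + 1 = i) :
    tridiagonal n d e i j = e := by
  simp only [tridiagonal, of_apply, Fin.ext_iff]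
  rw [if_neg (by omega), if_pos h]

lemma tridiagonal_apply_of_succ_lt {i j : Fin n} (h : i.1 + 1 < j ∨ j.1 + 1 < i) :
    tridiagonal n d e i j = 0 := by
  simp only [tridiagonal, of_apply, Fin.ext_iff]
  rw [if_neg (by omega), if_neg (by omega)]

lemma tridiagonal_transpose : (tridiagonal n d e)ᵀ = tridiagonal n d e := by
  ext i j
  simp only [tridiagonal, transpose_apply, of_apply, eq_comm (a := j), or_comm]
  split_ifs with h <;> simp [h]

lemma tridiagonal_submatrix_castSucc :
    (tridiagonal (n + 1) d e).submatrix Fin.castSucc Fin.castSucc = tridiagonal n d e := by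
  ext i j
  simp [tridiagonal, Fin.ext_iff]

lemma tridiagonal_submatrix_succ :
    (tridiagonal (n + 1) d e).submatrix Fin.succ Fin.succ =
      tridiagonal n (fun k => d (k + 1)) e := by
  ext i j
  simp [tridiagonal, Fin.ext_iff]

lemma isHermitian_tridiagonal [Star R] [TrivialStar R] : (tridiagonal n d e).IsHermitian := by
  rw [IsHermitian, conjTranspose_eq_transpose_of_trivial, tridiagonal_transpose]

end Zero

section CommRing

variable [CommRing R] (d : ℕ → R) (e : R)

lemma det_tridiagonal_succ_succ (k : ℕ) :
    (tridiagonal (k + 2) d e).det =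
      d (k + 1) * (tridiagonal (k + 1) d e).det - e ^ 2 * (tridiagonal k d e).det := by
  rw [det_succ_row _ (Fin.last (k + 1)), Fin.sum_univ_castSucc, Fin.sum_univ_castSucc]
  have hfar (j : Fin k) : tridiagonal (k + 2) d e (Fin.last (k + 1)) j.castSucc.castSucc = 0 :=
    tridiagonal_apply_of_succ_lt d e (by simp)
  have hnext : ((tridiagonal (k + 2) d e).submatrix (Fin.last (k + 1)).succAbove
      (Fin.last k).castSucc.succAbove).det = e * (tridiagonal k d e).det := by
    set N := (tridiagonal (k + 2) d e).submatrix (Fin.last (k + 1)).succAbove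
      (Fin.last k).castSucc.succAbove
    have hfar (i : Fin k) : N i.castSucc (Fin.last k) = 0 :=
      tridiagonal_apply_of_succ_lt d e (by simp)
    have hminor : N.submatrix (Fin.last k).succAbove (Fin.last k).succAbove =
        tridiagonal k d e := by
      ext i j
      simp [N, Fin.succAbove_castSucc_of_lt _ _ (Fin.castSucc_lt_last j), tridiagonal,
        Fin.ext_iff]
    rw [det_succ_column N (Fin.last k), Fin.sum_univ_castSucc]
    simp only [hfar, mul_zero, zero_mul, Finset.sum_const_zero, zero_add, hminor]
    rw [show N (Fin.last k) (Fin.last k) = e from tridiagonal_apply_of_succ_eq d e (by simp)]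
    simp
  rw [hnext]
  simp only [hfar, mul_zero, zero_mul, Finset.sum_const_zero, zero_add, Fin.succAbove_last,
    tridiagonal_submatrix_castSucc, tridiagonal_apply_self,
    tridiagonal_apply_of_succ_eq d e (i := Fin.last (k + 1)) (j := (Fin.last k).castSucc) (by simp)]
  simp [pow_succ]
  ring

lemma tridiagonal_mulVec_apply_zero {k : ℕ} (x : Fin (k + 2) → R) :
    (tridiagonal (k + 2) d e *ᵥ x) 0 = d 0 * x 0 + e * x 1 := by
  have hfar (j : Fin k) : tridiagonal (k + 2) d e 0 j.succ.succ = 0 :=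
    tridiagonal_apply_of_succ_lt d e (by simp)
  simp only [mulVec, dotProduct, Fin.sum_univ_succ, hfar, zero_mul, sum_const_zero, add_zero]
  rw [tridiagonal_apply_self, tridiagonal_apply_of_succ_eq d e (by simp)]
  rfl

lemma dotProduct_tridiagonal_mulVec (n : ℕ) (g : ℕ → R) (hg : g n = 0) :
    (fun i : Fin n => g i) ⬝ᵥ tridiagonal n d e *ᵥ (fun i => g i) =
      ∑ i ∈ range n, d i * g i ^ 2 + 2 * e * ∑ i ∈ range n, g i * g (i + 1) := by
  have hentry (i j : ℕ) : (if i = j then d i else if i + 1 = j ∨ j + 1 = i then e else 0) * g j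
      * g i = (if i = j then d i * g i ^ 2 else 0) + e * (if i + 1 = j then g i * g j else 0) +
        e * (if j + 1 = i then g j * g i else 0) := by
    split_ifs <;> subst_vars <;> first | ring1 | omega
  have hlast : ∑ i ∈ range n, (if i + 1 < n then g i * g (i + 1) else 0) =
      ∑ i ∈ range n, g i * g (i + 1) := by
    refine sum_congr rfl fun i hi => ?_
    split_ifs with h
    · rfl
    · rw [show i + 1 = n by simp at hi; omega, hg, mul_zero]
  calc (fun i : Fin n => g i) ⬝ᵥ tridiagonal n d e *ᵥ (fun i => g i)
      = ∑ i ∈ range n, ∑ j ∈ range n,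
          (if i = j then d i else if i + 1 = j ∨ j + 1 = i then e else 0) * g j * g i := by
        simp only [dotProduct, mulVec, sum_mul, mul_comm (g _)]
        rw [← Fin.sum_univ_eq_sum_range]
        refine sum_congr rfl fun i _ => ?_
        rw [← Fin.sum_univ_eq_sum_range]
        simp [tridiagonal, Fin.ext_iff]
    _ = _ := by
        simp only [hentry, sum_add_distrib, ← mul_sum]
        rw [sum_comm (f := fun i j => if j + 1 = i then g j * g i else 0)]
        simp only [sum_ite_eq, mem_range, hlast]
        rw [sum_congr rfl fun i hi => if_pos (mem_range.mp hi)]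
        ring

end CommRing

end Tridiagonal

section LowerOnes

variable {R : Type*} [CommRing R] {n : ℕ}

def lowerOnes (n : ℕ) : Matrix (Fin n) (Fin n) R := of fun i j => if j ≤ i then 1 else 0

lemma det_lowerOnes : (lowerOnes n : Matrix (Fin n) (Fin n) R).det = 1 := by
  rw [det_of_isLowerTriangular (lowerOnes n) fun i j (h : i < j) => if_neg (not_le.mpr h)]
  simp [lowerOnes]

lemma lowerOnes_mul_mul_transpose_apply (F : ℕ → ℕ → R) (i j : Fin n) :
    (lowerOnes n * of (fun p q : Fin n => F p q) * (lowerOnes n)ᵀ : Matrix (Fin n) (Fin n) R) i j =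
      ∑ p ∈ range (i + 1), ∑ q ∈ range (j + 1), F p q := by
  simp only [mul_apply, lowerOnes, of_apply, transpose_apply, ite_mul, one_mul, zero_mul, mul_ite,
    mul_one, mul_zero]
  rw [sum_comm, ← sum_ite_le_eq_sum_range _ j]
  refine sum_congr rfl fun q _ => ?_
  rw [← sum_ite_le_eq_sum_range _ i]

end LowerOnes

lemma posSemidef_iff_det_nonneg_of_posDef_submatrix_succ {m : ℕ}
    {M : Matrix (Fin (m + 1)) (Fin (m + 1)) ℝ} (hM : M.IsHermitian)
    (hD : (M.submatrix Fin.succ Fin.succ).PosDef) : M.PosSemidef ↔ 0 ≤ M.det := by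
  let e : Fin 1 ⊕ Fin m ≃ Fin (m + 1) := finSumFinEquiv.trans (finCongr (add_comm 1 m))
  have he : ∀ i, e (Sum.inr i) = i.succ := fun i => by ext; simp [e]
  set D := M.submatrix Fin.succ Fin.succ
  set N := M.submatrix e e
  have hN : fromBlocks N.toBlocks₁₁ N.toBlocks₁₂ N.toBlocks₁₂ᴴ D = N := by
    ext (i | i) (j | j)
    · rfl
    · rfl
    · simpa [N, toBlocks₁₂] using hM.apply _ _
    · simp [N, D, he]
  have : Invertible D := hD.isUnit.invertible
  rw [← posSemidef_submatrix_equiv e, ← det_submatrix_equiv_self e]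
  change N.PosSemidef ↔ 0 ≤ N.det
  rw [← hN, hD.fromBlocks₂₂, det_fromBlocks₂₂, invOf_eq_nonsing_inv,
    mul_nonneg_iff_of_pos_left hD.det_pos]
  generalize N.toBlocks₁₁ - N.toBlocks₁₂ * D⁻¹ * N.toBlocks₁₂ᴴ = c
  have hc : c = diagonal fun _ => c 0 0 := by
    ext i j
    fin_cases i; fin_cases j; rfl
  rw [hc, posSemidef_diagonal_iff, det_diagonal]
  simp

lemma sin_mul_add_sin_add_two_mul (x θ : ℝ) :
    sin (x * θ) + sin ((x + 2) * θ) = 2 * cos θ * sin ((x + 1) * θ) := by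
  rw [sin_add_sin, show (x * θ + (x + 2) * θ) / 2 = (x + 1) * θ by ring,
    show (x * θ - (x + 2) * θ) / 2 = -θ by ring, cos_neg]
  ring

lemma two_mul_le_div_mul_sq_add_div_mul_sq {p q : ℝ} (hp : 0 < p) (hq : 0 < q) (a b : ℝ) :
    2 * a * b ≤ q / p * a ^ 2 + p / q * b ^ 2 := by
  rw [div_mul_eq_mul_div, div_mul_eq_mul_div, div_add_div _ _ hp.ne' hq.ne',
    le_div_iff₀ (mul_pos hp hq)]
  nlinarith [sq_nonneg (q * a - p * b)]

lemma sum_mul_succ_le_cos_mul_sum_sq (m : ℕ) (g : ℕ → ℝ) (hg : g m = 0) :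
    ∑ i ∈ range m, g i * g (i + 1) ≤ cos (π / (m + 1)) * ∑ i ∈ range m, g i ^ 2 := by
  rcases m with _ | k
  · simp
  set θ := π / ((k + 1 : ℕ) + 1)
  have hθ : ((k : ℝ) + 2) * θ = π := by
    simp only [θ]; push_cast; field_simp; ring
  have hsin (j : ℕ) (hj : j ≤ k) : 0 < sin ((j + 1) * θ) := by
    have hj' : (j : ℝ) + 1 < k + 2 := by norm_cast; omega
    apply sin_pos_of_pos_of_lt_pi (by positivity)
    rw [← hθ]
    gcongr
  -- With `u j = sin ((j + 1) * θ)`, the weights are `b j = u (j - 1) / u j`; the eigenvector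
  -- equation `u (j - 1) + u (j + 1) = 2 cos θ * u j` reads `2 cos θ - b j = 1 / b (j + 1)`.
  set b : ℕ → ℝ := fun j => sin (j * θ) / sin ((j + 1) * θ)
  have hterm (j : ℕ) (hj : j < k) : 2 * (g j * g (j + 1)) ≤
      2 * cos θ * g j ^ 2 + (b (j + 1) * g (j + 1) ^ 2 - b j * g j ^ 2) := by
    have h1 := hsin j hj.le
    have h2 : 0 < sin ((j + 2) * θ) := by
      have := hsin (j + 1) hj; push_cast at this; rwa [add_assoc, one_add_one_eq_two] at this
    have key := two_mul_le_div_mul_sq_add_div_mul_sq h1 h2 (g j) (g (j + 1))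
    have hb : b (j + 1) = sin ((j + 1) * θ) / sin ((j + 2) * θ) := by
      simp only [b]; push_cast; ring_nf
    have h2c : sin ((j + 2) * θ) / sin ((j + 1) * θ) = 2 * cos θ - b j := by
      rw [eq_sub_iff_add_eq, ← add_div, div_eq_iff h1.ne']
      linarith [sin_mul_add_sin_add_two_mul j θ]
    rw [h2c, ← hb] at key
    linarith
  have hb0 : b 0 = 0 := by simp [b]
  have hbk : b k = 2 * cos θ := by
    have := sin_mul_add_sin_add_two_mul k θ
    rw [hθ, sin_pi, add_zero] at this
    simp only [b, this]
    field_simp [(hsin k le_rfl).ne']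
  have hsum := sum_le_sum fun j (hj : j ∈ range k) => hterm j (mem_range.mp hj)
  rw [← mul_sum, sum_add_distrib, ← mul_sum, sum_range_sub (fun j => b j * g j ^ 2), hb0,
    hbk] at hsum
  rw [sum_range_succ, hg, mul_zero, add_zero, sum_range_succ]
  linarith

lemma abs_sum_mul_succ_le_cos_mul_sum_sq (m : ℕ) (g : ℕ → ℝ) (hg : g m = 0) :
    |∑ i ∈ range m, g i * g (i + 1)| ≤ cos (π / (m + 1)) * ∑ i ∈ range m, g i ^ 2 := by
  have hsign (i : ℕ) : ((-1 : ℝ) ^ i) ^ 2 = 1 := by rw [← pow_mul, pow_mul', neg_one_sq, one_pow]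
  have hprod : ∑ i ∈ range m, (-1) ^ i * g i * ((-1) ^ (i + 1) * g (i + 1)) =
      -∑ i ∈ range m, g i * g (i + 1) := by
    rw [← sum_neg_distrib]
    refine sum_congr rfl fun i _ => ?_
    linear_combination (-(g i * g (i + 1))) * hsign i
  have hsq : ∑ i ∈ range m, ((-1) ^ i * g i) ^ 2 = ∑ i ∈ range m, g i ^ 2 :=
    sum_congr rfl fun i _ => by rw [mul_pow, hsign, one_mul]
  have halt := sum_mul_succ_le_cos_mul_sum_sq m (fun i => (-1) ^ i * g i) (by simp [hg])
  rw [hprod, hsq] at halt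
  rw [abs_le]
  exact ⟨by linarith, sum_mul_succ_le_cos_mul_sum_sq m g hg⟩

lemma sum_mul_succ_eq_neg_mul_sum_sq (g : ℕ → ℝ) (c : ℝ) {m : ℕ} (h0 : g 0 = 0) (hm : g m = 0)
    (hrec : ∀ j, g j + g (j + 2) = -2 * c * g (j + 1)) :
    ∑ j ∈ range m, g j * g (j + 1) = -c * ∑ j ∈ range m, g j ^ 2 := by
  have hprod := sum_range_succ_eq_sum_range_of_eq (fun j => g j * g (j + 1)) (m := m)
    (by simp [h0, hm])
  have hsq := sum_range_succ_eq_sum_range_of_eq (fun j => g j ^ 2) (m := m) (by simp [h0, hm])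
  have hsplit : ∑ j ∈ range m, g (j + 1) * (g j + g (j + 2)) =
      ∑ j ∈ range m, g j * g (j + 1) + ∑ j ∈ range m, g (j + 1) * g (j + 1 + 1) := by
    rw [← sum_add_distrib]
    exact sum_congr rfl fun j _ => by ring
  have hrec' : ∑ j ∈ range m, g (j + 1) * (g j + g (j + 2)) =
      -2 * c * ∑ j ∈ range m, g (j + 1) ^ 2 := by
    rw [mul_sum]
    exact sum_congr rfl fun j _ => by rw [hrec]; ring
  rw [hprod] at hsplit
  rw [hsq] at hrec'
  linarith

lemma posDef_tridiagonal_const {m : ℕ} {t : ℝ} (ht : -1 / (2 + 2 * cos (π / (m + 1))) < t) :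
    (tridiagonal m (fun _ => 1 + 2 * t) (-t)).PosDef := by
  refine .of_dotProduct_mulVec_pos (isHermitian_tridiagonal _ _) fun x hx => ?_
  set g : ℕ → ℝ := fun j => if h : j < m then x ⟨j, h⟩ else 0
  have hgm : g m = 0 := by simp [g]
  have hx' : x = fun i : Fin m => g i := by ext i; simp [g]
  have hN : 0 < ∑ j ∈ range m, g j ^ 2 := by
    obtain ⟨i, hi⟩ := Function.ne_iff.mp hx
    exact sum_pos' (fun j _ => sq_nonneg _)
      ⟨i, mem_range.mpr i.isLt, by simpa [g] using sq_pos_of_ne_zero hi⟩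
  have hP := abs_le.mp (abs_sum_mul_succ_le_cos_mul_sum_sq m g hgm)
  set c := cos (π / (m + 1))
  rw [star_trivial, hx', dotProduct_tridiagonal_mulVec _ _ _ _ hgm, ← mul_sum]
  rcases le_or_gt 0 t with h0 | h0
  · have hc : c * ∑ j ∈ range m, g j ^ 2 ≤ ∑ j ∈ range m, g j ^ 2 :=
      mul_le_of_le_one_left hN.le (cos_le_one _)
    nlinarith
  · have hpos : 0 < 2 + 2 * c := by
      by_contra! h
      linarith [div_nonneg_of_nonpos (by norm_num : (-1 : ℝ) ≤ 0) h]
    have hmin : 0 < 1 + t * (2 + 2 * c) := by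
      rw [div_lt_iff₀ hpos] at ht
      linarith
    nlinarith

lemma dotProduct_tridiagonal_mulVec_alternating_sin {n : ℕ} (hn : n ≠ 0) {d : ℕ → ℝ} {t : ℝ}
    (hd : ∀ i, d (i + 1) = 1 + 2 * t) :
    (fun i : Fin n => (-1) ^ (i : ℕ) * sin (i * (π / n))) ⬝ᵥ
        tridiagonal n d (-t) *ᵥ (fun i : Fin n => (-1) ^ (i : ℕ) * sin (i * (π / n))) =
      (1 + t * (2 + 2 * cos (π / n))) * ∑ j ∈ range n, ((-1) ^ j * sin (j * (π / n))) ^ 2 := by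
  set θ := π / n
  set g : ℕ → ℝ := fun j => (-1) ^ j * sin (j * θ)
  have hg0 : g 0 = 0 := by simp [g]
  have hgn : g n = 0 := by
    simp [g, θ, mul_div_cancel₀ π (show (n : ℝ) ≠ 0 by exact_mod_cast hn)]
  have hrec (j : ℕ) : g j + g (j + 2) = -2 * cos θ * g (j + 1) := by
    simp only [g]
    push_cast
    linear_combination (-1) ^ j * sin_mul_add_sin_add_two_mul j θ
  have hdiag : ∑ j ∈ range n, d j * g j ^ 2 = (1 + 2 * t) * ∑ j ∈ range n, g j ^ 2 := by
    rw [mul_sum]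
    refine sum_congr rfl fun j _ => ?_
    rcases j with _ | j
    · simp [hg0]
    · rw [hd]
  rw [dotProduct_tridiagonal_mulVec _ _ _ _ hgn, hdiag,
    sum_mul_succ_eq_neg_mul_sum_sq g _ hg0 hgn hrec]
  ring

lemma lt_of_posSemidef_tridiagonal {n : ℕ} (hn : 2 ≤ n) {d : ℕ → ℝ} {t : ℝ}
    (hd : ∀ i, d (i + 1) = 1 + 2 * t) (h : (tridiagonal n d (-t)).PosSemidef) :
    -1 / (2 + 2 * cos (π / n)) < t := by
  have hθ : 0 < π / n ∧ π / n ≤ π / 2 :=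
    ⟨by positivity, div_le_div_of_nonneg_left pi_pos.le two_pos (by exact_mod_cast hn)⟩
  have hsin : 0 < sin (π / n) := sin_pos_of_pos_of_lt_pi hθ.1 (by linarith [pi_pos])
  have hc : 0 ≤ cos (π / n) := cos_nonneg_of_mem_Icc ⟨by linarith [pi_pos], hθ.2⟩
  set x := fun i : Fin n => (-1) ^ (i : ℕ) * sin (i * (π / n))
  by_contra! hle
  have hneg : 1 + t * (2 + 2 * cos (π / n)) ≤ 0 := by
    rw [le_div_iff₀ (by linarith)] at hle
    linarith
  have hzero : tridiagonal n d (-t) *ᵥ x = 0 := by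
    rw [← h.dotProduct_mulVec_zero_iff, star_trivial]
    refine le_antisymm ?_ (by simpa using h.dotProduct_mulVec_nonneg x)
    rw [dotProduct_tridiagonal_mulVec_alternating_sin (by omega) hd]
    exact mul_nonpos_of_nonpos_of_nonneg hneg (sum_nonneg fun j _ => sq_nonneg _)
  obtain ⟨k, rfl⟩ : ∃ k, n = k + 2 := ⟨n - 2, by omega⟩
  have hfirst := congr_fun hzero 0
  rw [tridiagonal_mulVec_apply_zero] at hfirst
  have ht0 : t = 0 := by
    push_cast at hsin
    simpa [x, hsin.ne'] using hfirst
  rw [ht0] at hneg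
  linarith

def B (n : ℕ) (s t : ℝ) : Matrix (Fin n) (Fin n) ℝ :=
  tridiagonal n (fun i => if i = 0 then 1 + s + t else 1 + 2 * t) (-t)

-- `A n s t i j = entryA s t (i + 1) (j + 1)`, padded with zeros at index `0`.
def entryA (s t : ℝ) (p q : ℕ) : ℝ :=
  if p = 0 ∨ q = 0 then 0 else ((min p q : ℕ) : ℝ) + s + if p = q then t else 0

lemma B_eq_of_entryA (n : ℕ) (s t : ℝ) :
    B n s t = of fun p q : Fin n => entryA s t (p + 1) (q + 1) - entryA s t p (q + 1) -
      entryA s t (p + 1) q + entryA s t p q := by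
  ext ⟨p, -⟩ ⟨q, -⟩
  simp only [B, tridiagonal, of_apply, Fin.mk.injEq]
  rcases Nat.lt_trichotomy p q with h | rfl | h
  · have h' : (p : ℝ) + 1 ≤ q := by exact_mod_cast h
    simp [entryA, h.ne, min_eq_left h', min_eq_left (by linarith : (p : ℝ) ≤ q),
      min_eq_left (by linarith : (p : ℝ) ≤ q + 1)]
    split_ifs <;> subst_vars <;> first | (push_cast; ring1) | omega
  · simp [entryA]
    split_ifs <;> subst_vars <;> push_cast <;> ring1
  · have h' : (q : ℝ) + 1 ≤ p := by exact_mod_cast h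
    simp [entryA, h.ne', min_eq_right h', min_eq_right (by linarith : (q : ℝ) ≤ p),
      min_eq_right (by linarith : (q : ℝ) ≤ p + 1)]
    split_ifs <;> subst_vars <;> first | (push_cast; ring1) | omega

lemma A_eq_lowerOnes_mul_B_mul_transpose (n : ℕ) (s t : ℝ) :
    A n s t = lowerOnes n * B n s t * (lowerOnes n)ᵀ := by
  ext i j
  rw [B_eq_of_entryA, lowerOnes_mul_mul_transpose_apply (fun p q => entryA s t (p + 1) (q + 1) -
    entryA s t p (q + 1) - entryA s t (p + 1) q + entryA s t p q), sum_range_sum_range_sub]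
  simp [A, entryA, Fin.ext_iff]

lemma posSemidef_A_iff_posSemidef_B (n : ℕ) (s t : ℝ) :
    (A n s t).PosSemidef ↔ (B n s t).PosSemidef := by
  have hL : IsUnit (lowerOnes n : Matrix (Fin n) (Fin n) ℝ) := by
    rw [isUnit_iff_isUnit_det, det_lowerOnes]
    exact isUnit_one
  rw [A_eq_lowerOnes_mul_B_mul_transpose, ← conjTranspose_eq_transpose_of_trivial,
    ← star_eq_conjTranspose, hL.posSemidef_star_right_conjugate_iff]

lemma det_B (s t : ℝ) : ∀ n, (B n s t).det = S 1 (s + 1) t n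
  | 0 => by simp [S]
  | 1 => by simp [B, tridiagonal, S]; ring
  | k + 2 => by
    rw [B, det_tridiagonal_succ_succ, ← B, ← B, det_B s t (k + 1), det_B s t k, S]
    simp

/-- For `n ≥ 2`, `Aₙ(s,t)` is positive semidefinite iff
`t > -1/(2 + 2 cos(π/n))` and `Sₙ(1,s+1;t) ≥ 0`. -/
theorem A_posSemidef_iff (s t : ℝ) (n : ℕ) (hn : 2 ≤ n) :
    (A n s t).PosSemidef ↔
      t > -1 / (2 + 2 * Real.cos (π / n)) ∧ S 1 (s + 1) t n ≥ 0 := by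
  obtain ⟨m, rfl⟩ : ∃ m, n = m + 1 := ⟨n - 1, by omega⟩
  have hT (ht : -1 / (2 + 2 * cos (π / (m + 1 : ℕ))) < t) :
      ((B (m + 1) s t).submatrix Fin.succ Fin.succ).PosDef := by
    rw [B, tridiagonal_submatrix_succ]
    push_cast at ht
    simpa using posDef_tridiagonal_const ht
  have hschur (ht : -1 / (2 + 2 * cos (π / (m + 1 : ℕ))) < t) :=
    posSemidef_iff_det_nonneg_of_posDef_submatrix_succ (isHermitian_tridiagonal _ _) (hT ht)
  rw [posSemidef_A_iff_posSemidef_B, ← det_B]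
  constructor
  · intro h
    have ht := lt_of_posSemidef_tridiagonal hn (fun i => by simp) h
    exact ⟨ht, (hschur ht).mp h⟩
  · rintro ⟨ht, hdet⟩
    exact (hschur ht).mpr hdet
end

section
/- For every integer n ≥ 1 and every real t, the n×n real symmetric matrix A_n(-1/2, t) with (i,j) entry min{i,j} − 1/2 + t·δ_{ij} (indices 1,…,n) is positive semidefinite if and only if t ≥ -1/(2 + 2·cos(π/(2n))). -/
/-!
In the tail sums `Yₖ = xₖ + ⋯ + x_{n-1}` (so `Y_n = 0`), the quadratic form of `Aₙ(s,t)` is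
`∑ₖ Yₖ² + s Y₀² + t ∑ₖ (Yₖ - Yₖ₊₁)²`. Put `θ = π/(2n)` and `cⱼ = cos(jθ)`: then
`cⱼ₊₂ = 2 cos θ cⱼ₊₁ - cⱼ`, `cⱼ > 0` for `j < n` and `c_n = 0`, and this
makes `(2 + 2 cos θ)(∑ₖ Yₖ² - Y₀²/2) - ∑ₖ (Yₖ - Yₖ₊₁)²` equal to the sum of squares
`∑ⱼ (cⱼ₊₁ Yⱼ + cⱼ Yⱼ₊₁)² / (cⱼ cⱼ₊₁)`, which vanishes at `Yₖ = (-1)ᵏ cₖ`.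
Hence for `s = -1/2` the form is nonnegative exactly when `(2 + 2 cos θ) t ≥ -1`.
-/

open Real

open Finset Matrix

theorem A_isHermitian (n : ℕ) (s t : ℝ) : (A n s t).IsHermitian := by
  ext i j
  simp only [conjTranspose_apply, A, of_apply, star_trivial, min_comm, eq_comm]

def tailSum {n : ℕ} (x : Fin n → ℝ) (k : ℕ) : ℝ := ∑ i : Fin n with k ≤ i.val, x i

theorem tailSum_sub_tailSum_succ {n : ℕ} (x : Fin n → ℝ) (i : Fin n) :
    tailSum x i - tailSum x (i + 1) = x i := by
  have : univ.filter (fun j : Fin n => i.val ≤ j.val)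
      = insert i (univ.filter fun j : Fin n => i.val + 1 ≤ j.val) := by
    ext j; simp only [mem_filter_univ, mem_insert, Fin.ext_iff]; omega
  rw [tailSum, tailSum, this, sum_insert (by simp), add_sub_cancel_right]

theorem tailSum_sub_succ {n k : ℕ} (hk : k ≤ n) (Y : ℕ → ℝ) :
    tailSum (fun i : Fin n => Y i - Y (i + 1)) k = Y k - Y n := by
  rw [tailSum, sum_filter,
    Fin.sum_univ_eq_sum_range (fun i => if k ≤ i then Y i - Y (i + 1) else 0), ← sum_filter,
    show {i ∈ range n | k ≤ i} = Ico k n by ext; simp; omega, ← neg_sub (Y n),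
    ← sum_Ico_sub Y hk, ← sum_neg_distrib]
  simp only [neg_sub]

theorem sum_sq_tailSum {n : ℕ} (x : Fin n → ℝ) :
    ∑ k ∈ range n, tailSum x k ^ 2
      = ∑ i, ∑ j, ((min (i.1 + 1) (j.1 + 1) : ℕ) : ℝ) * (x i * x j) := by
  simp only [tailSum, sum_filter, sq, sum_mul_sum]
  rw [sum_comm]
  refine sum_congr rfl fun i _ => ?_
  rw [sum_comm]
  refine sum_congr rfl fun j _ => ?_
  simp only [ite_zero_mul_ite_zero, ← sum_filter, sum_const, nsmul_eq_mul]
  congr 2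
  rw [show {k ∈ range n | k ≤ i.val ∧ k ≤ j.val} = range (min i.val j.val + 1) by
    ext; simp; omega, card_range]
  omega

theorem tailSum_zero {n : ℕ} (x : Fin n → ℝ) : tailSum x 0 = ∑ i, x i := by
  simp [tailSum]

theorem tailSum_of_le {n k : ℕ} (hk : n ≤ k) (x : Fin n → ℝ) : tailSum x k = 0 :=
  sum_eq_zero fun i hi => absurd (mem_filter.1 hi).2 (by omega)

theorem dotProduct_A_mulVec {n : ℕ} (s t : ℝ) (x : Fin n → ℝ) :
    x ⬝ᵥ A n s t *ᵥ x
      = ∑ k ∈ range n, tailSum x k ^ 2 + s * tailSum x 0 ^ 2 + t * ∑ i, x i ^ 2 := by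
  have hs : s * tailSum x 0 ^ 2 = ∑ i, ∑ j, s * (x i * x j) := by
    rw [tailSum_zero, sq, sum_mul_sum, mul_sum]
    simp only [mul_sum]
  have ht : t * ∑ i, x i ^ 2 = ∑ i, ∑ j, (if i = j then t else 0) * (x i * x j) := by
    simp [mul_sum, sq]
  rw [sum_sq_tailSum, hs, ht, ← sum_add_distrib, ← sum_add_distrib]
  simp only [dotProduct, mulVec, A, of_apply, mul_sum, ← sum_add_distrib]
  exact sum_congr rfl fun i _ => sum_congr rfl fun j _ => by ring

theorem A_posSemidef_iff_s17 (n : ℕ) (s t : ℝ) :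
    (A n s t).PosSemidef ↔ ∀ Y : ℕ → ℝ, Y n = 0 →
      0 ≤ ∑ k ∈ range n, Y k ^ 2 + s * Y 0 ^ 2 + t * ∑ k ∈ range n, (Y k - Y (k + 1)) ^ 2 := by
  rw [posSemidef_iff_dotProduct_mulVec, and_iff_right (A_isHermitian n s t)]
  constructor
  · intro h Y hY
    have hx := h fun i => Y i - Y (i + 1)
    rw [star_trivial, dotProduct_A_mulVec,
      Fin.sum_univ_eq_sum_range (fun k => (Y k - Y (k + 1)) ^ 2)] at hx
    rwa [sum_congr rfl fun k hk => by rw [tailSum_sub_succ (mem_range.1 hk).le, hY, sub_zero],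
      tailSum_sub_succ n.zero_le, hY, sub_zero] at hx
  · intro h x
    have hY := h (tailSum x) (tailSum_of_le le_rfl x)
    rw [← Fin.sum_univ_eq_sum_range (fun k => (tailSum x k - tailSum x (k + 1)) ^ 2)] at hY
    simp_rw [tailSum_sub_tailSum_succ] at hY
    rwa [star_trivial, dotProduct_A_mulVec]

section ThreeTermRecurrence

variable {a : ℝ} {c : ℕ → ℝ}

theorem tridiag_form_sub_eq_sum_sq_div (hc₁ : c 1 = a * c 0)
    (hrec : ∀ j, c (j + 2) = 2 * a * c (j + 1) - c j) (Y : ℕ → ℝ) :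
    ∀ m, (∀ j ≤ m, c j ≠ 0) →
      2 * a * ∑ k ∈ range (m + 1), Y k ^ 2 - a * Y 0 ^ 2
          + 2 * ∑ k ∈ range m, Y k * Y (k + 1) - c (m + 1) / c m * Y m ^ 2
        = ∑ j ∈ range m, (c (j + 1) * Y j + c j * Y (j + 1)) ^ 2 / (c j * c (j + 1))
  | 0, hne => by
    have h₀ := hne 0 le_rfl
    simp only [zero_add, hc₁, range_one, sum_singleton, range_zero, sum_empty]
    field_simp
    ring
  | m + 1, hne => by
    have hm := hne m (by omega)
    have hm₁ := hne (m + 1) le_rfl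
    rw [sum_range_succ (fun j => (c (j + 1) * Y j + c j * Y (j + 1)) ^ 2 / (c j * c (j + 1))) m,
      ← tridiag_form_sub_eq_sum_sq_div hc₁ hrec Y m fun j hj => hne j (by omega),
      sum_range_succ (fun k => Y k ^ 2) (m + 1), sum_range_succ (fun k => Y k * Y (k + 1)) m, hrec]
    field_simp
    ring

theorem half_form_sub_sum_sq_sub_eq_sum_sq_div (hc₁ : c 1 = a * c 0)
    (hrec : ∀ j, c (j + 2) = 2 * a * c (j + 1) - c j) {n : ℕ} (hcn : c (n + 1) = 0)
    (hne : ∀ j ≤ n, c j ≠ 0) {Y : ℕ → ℝ} (hY : Y (n + 1) = 0) :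
    (2 + 2 * a) * (∑ k ∈ range (n + 1), Y k ^ 2 - Y 0 ^ 2 / 2)
        - ∑ k ∈ range (n + 1), (Y k - Y (k + 1)) ^ 2
      = ∑ j ∈ range n, (c (j + 1) * Y j + c j * Y (j + 1)) ^ 2 / (c j * c (j + 1)) := by
  rw [← tridiag_form_sub_eq_sum_sq_div hc₁ hrec Y n hne, hcn, zero_div, zero_mul, sub_zero]
  have hshift : ∑ k ∈ range (n + 1), Y (k + 1) ^ 2 = ∑ k ∈ range (n + 1), Y k ^ 2 - Y 0 ^ 2 := by
    rw [sum_range_succ (fun k => Y (k + 1) ^ 2), sum_range_succ' (fun k => Y k ^ 2), hY]; ring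
  have hcross : ∑ k ∈ range (n + 1), Y k * Y (k + 1) = ∑ k ∈ range n, Y k * Y (k + 1) := by
    rw [sum_range_succ, hY, mul_zero, add_zero]
  simp only [sub_sq, sum_add_distrib, sum_sub_distrib, mul_assoc, ← mul_sum, hshift, hcross]
  ring

end ThreeTermRecurrence

theorem cos_add_two_mul (θ x : ℝ) : cos (x + 2 * θ) = 2 * cos θ * cos (x + θ) - cos x := by
  have := cos_add_cos (x + 2 * θ) x
  rw [show (x + 2 * θ + x) / 2 = x + θ by ring, show (x + 2 * θ - x) / 2 = θ by ring] at this
  linarith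

theorem cos_nat_mul_pi_div_two_mul_pos {n k : ℕ} (hk : k < n) : 0 < cos (k * (π / (2 * n))) := by
  have hn : (0 : ℝ) < n := by exact_mod_cast (k.zero_le.trans_lt hk)
  have hk' : (k : ℝ) < n := by exact_mod_cast hk
  apply cos_pos_of_mem_Ioo
  constructor
  · have : 0 ≤ (k : ℝ) * (π / (2 * n)) := by positivity
    linarith [pi_pos]
  · calc (k : ℝ) * (π / (2 * n)) < n * (π / (2 * n)) := by gcongr
      _ = π / 2 := by field_simp

theorem cos_pi_div_two_mul_nonneg (n : ℕ) : 0 ≤ cos (π / (2 * n)) := by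
  apply cos_nonneg_of_mem_Icc
  constructor
  · have : 0 ≤ π / (2 * n) := by positivity
    linarith [pi_pos]
  · rcases n.eq_zero_or_pos with rfl | hn
    · simpa using pi_div_two_pos.le
    · have : (1 : ℝ) ≤ n := by exact_mod_cast hn
      exact div_le_div_of_nonneg_left pi_pos.le two_pos (by linarith)

theorem cos_half_form_sub_sum_sq_sub_eq_sum_sq_div {n : ℕ} (hn : 0 < n) {Y : ℕ → ℝ}
    (hY : Y n = 0) :
    (2 + 2 * cos (π / (2 * n))) * (∑ k ∈ range n, Y k ^ 2 - Y 0 ^ 2 / 2)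
        - ∑ k ∈ range n, (Y k - Y (k + 1)) ^ 2
      = ∑ j ∈ range (n - 1), (cos (↑(j + 1) * (π / (2 * n))) * Y j
          + cos (j * (π / (2 * n))) * Y (j + 1)) ^ 2
          / (cos (j * (π / (2 * n))) * cos (↑(j + 1) * (π / (2 * n)))) := by
  obtain ⟨m, rfl⟩ : ∃ m, n = m + 1 := ⟨n - 1, by omega⟩
  set θ := π / (2 * ((m + 1 : ℕ) : ℝ))
  have hc₁ : cos ((1 : ℕ) * θ) = cos θ * cos ((0 : ℕ) * θ) := by simp
  have hrec (j : ℕ) : cos (↑(j + 2) * θ) = 2 * cos θ * cos (↑(j + 1) * θ) - cos (j * θ) := by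
    simpa only [Nat.cast_add, Nat.cast_ofNat, Nat.cast_one, add_mul, one_mul] using
      cos_add_two_mul θ (j * θ)
  have hcn : cos (↑(m + 1) * θ) = 0 := by
    rw [show ((m + 1 : ℕ) : ℝ) * θ = π / 2 by simp only [θ]; field_simp, cos_pi_div_two]
  rw [Nat.add_sub_cancel]
  exact half_form_sub_sum_sq_sub_eq_sum_sq_div (c := fun j : ℕ => cos (j * θ)) hc₁ hrec hcn
    (fun j hj => (cos_nat_mul_pi_div_two_mul_pos (by omega)).ne') hY

theorem sum_sq_sub_le_cos_half_form {n : ℕ} (hn : 0 < n) {Y : ℕ → ℝ} (hY : Y n = 0) :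
    ∑ k ∈ range n, (Y k - Y (k + 1)) ^ 2
      ≤ (2 + 2 * cos (π / (2 * n))) * (∑ k ∈ range n, Y k ^ 2 - Y 0 ^ 2 / 2) := by
  rw [← sub_nonneg, cos_half_form_sub_sum_sq_sub_eq_sum_sq_div hn hY]
  refine sum_nonneg fun j hj => ?_
  have := cos_nat_mul_pi_div_two_mul_pos (n := n) (k := j) (by simp at hj; omega)
  have := cos_nat_mul_pi_div_two_mul_pos (n := n) (k := j + 1) (by simp at hj; omega)
  positivity

theorem exists_sum_sq_sub_eq_cos_half_form {n : ℕ} (hn : 0 < n) :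
    ∃ Z : ℕ → ℝ, Z n = 0 ∧ ∑ k ∈ range n, (Z k - Z (k + 1)) ^ 2
      = (2 + 2 * cos (π / (2 * n))) * (∑ k ∈ range n, Z k ^ 2 - Z 0 ^ 2 / 2)
      ∧ 0 < ∑ k ∈ range n, (Z k - Z (k + 1)) ^ 2 := by
  set Z : ℕ → ℝ := fun k => (-1) ^ k * cos (k * (π / (2 * n)))
  have hZn : Z n = 0 := by
    have : (n : ℝ) ≠ 0 := by positivity
    simp only [Z, show (n : ℝ) * (π / (2 * n)) = π / 2 by field_simp, cos_pi_div_two, mul_zero]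
  refine ⟨Z, hZn, ?_, ?_⟩
  · refine (sub_eq_zero.1 ?_).symm
    rw [cos_half_form_sub_sum_sq_sub_eq_sum_sq_div hn hZn]
    refine sum_eq_zero fun j _ => ?_
    simp only [Z, pow_succ]
    ring
  · calc 0 < (1 + cos (π / (2 * n))) ^ 2 := by
          have := cos_pi_div_two_mul_nonneg n; positivity
      _ = (Z 0 - Z 1) ^ 2 := by simp [Z]
      _ ≤ ∑ k ∈ range n, (Z k - Z (k + 1)) ^ 2 :=
          single_le_sum (f := fun k => (Z k - Z (k + 1)) ^ 2) (fun _ _ => sq_nonneg _)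
            (mem_range.2 hn)

/-- `Aₙ(-1/2,t)` is positive semidefinite iff `t ≥ -1/(2 + 2 cos(π/(2n)))`. -/
theorem A_neg_half_posSemidef_iff (n : ℕ) (hn : 1 ≤ n) (t : ℝ) :
    (A n (-1 / 2) t).PosSemidef ↔ t ≥ -1 / (2 + 2 * Real.cos (π / (2 * n))) := by
  have hc : 0 < 2 + 2 * cos (π / (2 * n)) := by linarith [cos_pi_div_two_mul_nonneg n]
  rw [A_posSemidef_iff_s17, ge_iff_le, div_le_iff₀ hc]
  constructor
  · intro h
    obtain ⟨Z, hZn, hZeq, hZpos⟩ := exists_sum_sq_sub_eq_cos_half_form hn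
    nlinarith [h Z hZn]
  · intro ht Y hY
    have hle := sum_sq_sub_le_cos_half_form hn hY
    have hS : 0 ≤ ∑ k ∈ range n, (Y k - Y (k + 1)) ^ 2 := sum_nonneg fun _ _ => sq_nonneg _
    nlinarith [mul_nonneg (by linarith : 0 ≤ 1 + (2 + 2 * cos (π / (2 * n))) * t) hS]
end

section
/- For every integer n ≥ 2, define x_i := (-1)^i · sin((2i−1)π/(2n)) for i = 1,…,n. Then: (1) ∑_{i=1}^{n} x_i = 0; (2) ∑_{i=1}^{n} x_i² = n/2; (3) ∑_{i=1}^{n} ∑_{j=1}^{n} |i−j|·x_i·x_j = (-1/(1+cos(π/n)))·(n/2). -/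
/-!
Writing `|i - j| = ∑ₖ (1[i ≤ k] - 1[j ≤ k])²`, the form `∑ᵢⱼ |i - j| xᵢ xⱼ` of a vector with
`∑ xᵢ = 0` becomes `-2 ∑ₖ Sₖ²`, where `Sₖ` are the partial sums of `x`. For
`xᵢ = (-1)ⁱ sin((2i - 1)θ)` with `θ = π/(2n)` the product-to-sum formula makes
`2 cos θ · Sₖ = (-1)ᵏ sin(2kθ)` telescope, so `Sₙ = 0`; both quadratic identities then reduce to
`∑_{k<n} sin²(α + kπ/n) = n/2`, true for `n ≥ 2` because the cosines `cos(2α + 2kπ/n)` sum to zero,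
together with `4 cos² θ = 2 (1 + cos(π/n))`.
-/

open Real Finset

lemma sum_range_ite_le (i n : ℕ) (h : i ≤ n) :
    ∑ k ∈ range n, (if i ≤ k then (1 : ℝ) else 0) = n - i := by
  rw [sum_boole, show {k ∈ range n | i ≤ k} = Ico i n by
      ext; simp only [mem_filter, mem_range, mem_Ico]; omega, Nat.card_Ico,
    Nat.cast_sub h]

lemma abs_sub_eq_sum_sq_ite {i j n : ℕ} (hi : i ≤ n) (hj : j ≤ n) :
    |(i : ℝ) - j| =
      ∑ k ∈ range n, ((if i ≤ k then 1 else 0) - (if j ≤ k then 1 else 0) : ℝ) ^ 2 := by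
  wlog hij : i ≤ j generalizing i j
  · rw [abs_sub_comm, this hj hi (by omega)]
    exact sum_congr rfl fun k _ => by ring
  have hsq (k : ℕ) : ((if i ≤ k then 1 else 0) - (if j ≤ k then 1 else 0) : ℝ) ^ 2 =
      (if i ≤ k then 1 else 0) - (if j ≤ k then 1 else 0) := by
    split_ifs <;> first | omega | norm_num
  rw [sum_congr rfl fun k _ => hsq k, sum_sub_distrib, sum_range_ite_le i n hi,
    sum_range_ite_le j n hj, abs_of_nonpos (by simp [hij])]
  ring

lemma sum_sum_sq_sub_mul_mul_of_sum_eq_zero {ι : Type*} (s : Finset ι) (a x : ι → ℝ)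
    (hx : ∑ i ∈ s, x i = 0) :
    ∑ i ∈ s, ∑ j ∈ s, (a i - a j) ^ 2 * x i * x j = -2 * (∑ i ∈ s, a i * x i) ^ 2 := by
  calc ∑ i ∈ s, ∑ j ∈ s, (a i - a j) ^ 2 * x i * x j
      = (∑ i ∈ s, a i ^ 2 * x i) * ∑ j ∈ s, x j + (∑ i ∈ s, x i) * ∑ j ∈ s, a j ^ 2 * x j
          - 2 * ((∑ i ∈ s, a i * x i) * ∑ j ∈ s, a j * x j) := by
        rw [sum_mul_sum, sum_mul_sum, sum_mul_sum, mul_sum, ← sum_add_distrib, ← sum_sub_distrib]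
        refine sum_congr rfl fun i _ => ?_
        rw [mul_sum, ← sum_add_distrib, ← sum_sub_distrib]
        exact sum_congr rfl fun j _ => by ring
    _ = -2 * (∑ i ∈ s, a i * x i) ^ 2 := by rw [hx]; ring

theorem sum_sum_abs_sub_mul_mul_of_sum_eq_zero (n : ℕ) (x : ℕ → ℝ)
    (hx : ∑ i ∈ range n, x i = 0) :
    ∑ i ∈ range n, ∑ j ∈ range n, |(i : ℝ) - j| * x i * x j =
      -2 * ∑ k ∈ range n, (∑ i ∈ range (k + 1), x i) ^ 2 := by
  set step : ℕ → ℕ → ℝ := fun k i => if i ≤ k then 1 else 0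
  have hpartial (k : ℕ) (hk : k ∈ range n) :
      ∑ i ∈ range n, step k i * x i = ∑ i ∈ range (k + 1), x i := by
    rw [mem_range] at hk
    simp only [step, ite_mul, one_mul, zero_mul, ← sum_filter]
    congr 1
    ext
    simp only [mem_filter, mem_range]
    omega
  calc ∑ i ∈ range n, ∑ j ∈ range n, |(i : ℝ) - j| * x i * x j
      = ∑ i ∈ range n, ∑ j ∈ range n, ∑ k ∈ range n, (step k i - step k j) ^ 2 * x i * x j :=
        sum_congr rfl fun i hi => sum_congr rfl fun j hj => by
          rw [abs_sub_eq_sum_sq_ite (mem_range.1 hi).le (mem_range.1 hj).le, sum_mul, sum_mul]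
    _ = ∑ i ∈ range n, ∑ k ∈ range n, ∑ j ∈ range n, (step k i - step k j) ^ 2 * x i * x j :=
        sum_congr rfl fun _ _ => sum_comm
    _ = ∑ k ∈ range n, -2 * (∑ i ∈ range n, step k i * x i) ^ 2 := by
        rw [sum_comm]
        exact sum_congr rfl fun k _ => sum_sum_sq_sub_mul_mul_of_sum_eq_zero _ _ _ hx
    _ = -2 * ∑ k ∈ range n, (∑ i ∈ range (k + 1), x i) ^ 2 := by
        rw [mul_sum]
        exact sum_congr rfl fun k hk => by rw [hpartial k hk]

lemma two_mul_cos_mul_sum_range_neg_one_pow_mul_sin (θ : ℝ) (m : ℕ) :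
    2 * cos θ * ∑ k ∈ range m, (-1) ^ (k + 1) * sin ((2 * k + 1) * θ) =
      (-1) ^ m * sin (2 * m * θ) := by
  induction m with
  | zero => simp
  | succ m ih =>
    have h := two_mul_sin_mul_cos ((2 * m + 1) * θ) θ
    rw [show (2 * m + 1) * θ - θ = 2 * m * θ by ring,
      show (2 * m + 1) * θ + θ = 2 * (m + 1) * θ by ring] at h
    rw [sum_range_succ, mul_add, ih]
    push_cast
    linear_combination -(-1) ^ m * h

lemma two_mul_sin_mul_sum_range_cos_add (α φ : ℝ) (m : ℕ) :
    2 * sin φ * ∑ k ∈ range m, cos (α + 2 * k * φ) =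
      sin (α + (2 * m - 1) * φ) - sin (α - φ) := by
  induction m with
  | zero => simp [sub_eq_add_neg]
  | succ m ih =>
    have h := sin_sub_sin (α + (2 * (m + 1) - 1) * φ) (α + (2 * m - 1) * φ)
    rw [show (α + (2 * (m + 1) - 1) * φ - (α + (2 * m - 1) * φ)) / 2 = φ by ring,
      show (α + (2 * (m + 1) - 1) * φ + (α + (2 * m - 1) * φ)) / 2 = α + 2 * m * φ by ring] at h
    rw [sum_range_succ, mul_add, ih]
    push_cast
    linear_combination -h

lemma sum_range_cos_add_eq_zero {n : ℕ} (hn : 2 ≤ n) (α : ℝ) :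
    ∑ k ∈ range n, cos (α + 2 * k * (π / n)) = 0 := by
  have hn' : (2 : ℝ) ≤ n := by exact_mod_cast hn
  have hsin : sin (π / n) ≠ 0 := (sin_pos_of_pos_of_lt_pi (by positivity)
    (div_lt_self pi_pos (by linarith))).ne'
  refine (mul_right_inj' (mul_ne_zero two_ne_zero hsin)).1 ?_
  rw [two_mul_sin_mul_sum_range_cos_add, mul_zero, sub_eq_zero,
    show α + (2 * n - 1) * (π / n) = α - π / n + 2 * π by field_simp; ring, sin_add_two_pi]

lemma sum_range_sin_add_sq {n : ℕ} (hn : 2 ≤ n) (α : ℝ) :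
    ∑ k ∈ range n, sin (α + k * (π / n)) ^ 2 = n / 2 := by
  have h := sum_range_cos_add_eq_zero hn (2 * α)
  simp only [sin_sq_eq_half_sub, mul_add, ← mul_assoc, sum_sub_distrib, ← sum_div, h,
    sum_const, card_range, nsmul_eq_mul]
  ring

lemma cos_pi_div_two_mul_pos {n : ℕ} (hn : 2 ≤ n) : 0 < cos (π / (2 * n)) := by
  have hn' : (2 : ℝ) ≤ n := by exact_mod_cast hn
  exact cos_pos_of_mem_Ioo ⟨by linarith [show 0 < π / (2 * n) by positivity, pi_pos],
    div_lt_div_of_pos_left pi_pos two_pos (by linarith)⟩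

lemma two_mul_cos_pi_div_two_mul_sq (n : ℕ) :
    (2 * cos (π / (2 * n))) ^ 2 = 2 * (1 + cos (π / n)) := by
  rw [mul_pow, cos_sq, show 2 * (π / (2 * n)) = π / n by ring]
  ring

/-- The vector `x` of the statement, indexed from `0`: `pathVector n k = x_{k+1}`. -/
noncomputable def pathVector (n k : ℕ) : ℝ := (-1) ^ (k + 1) * sin ((2 * k + 1) * (π / (2 * n)))

lemma two_mul_cos_mul_sum_range_pathVector (n m : ℕ) :
    2 * cos (π / (2 * n)) * ∑ k ∈ range m, pathVector n k = (-1) ^ m * sin (m * (π / n)) := by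
  simp only [pathVector]
  rw [two_mul_cos_mul_sum_range_neg_one_pow_mul_sin,
    show 2 * m * (π / (2 * n)) = m * (π / n) by ring]

lemma sum_range_pathVector {n : ℕ} (hn : 2 ≤ n) : ∑ k ∈ range n, pathVector n k = 0 := by
  have h := two_mul_cos_mul_sum_range_pathVector n n
  rw [mul_div_cancel₀ _ (by positivity), sin_pi, mul_zero] at h
  exact (mul_eq_zero.1 h).resolve_left (mul_pos two_pos (cos_pi_div_two_mul_pos hn)).ne'

lemma sum_range_pathVector_sq {n : ℕ} (hn : 2 ≤ n) :
    ∑ k ∈ range n, pathVector n k ^ 2 = n / 2 := by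
  rw [← sum_range_sin_add_sq hn (π / (2 * n))]
  refine sum_congr rfl fun k _ => ?_
  rw [pathVector, mul_pow, ← pow_mul, pow_mul', neg_one_sq, one_pow, one_mul]
  congr 2
  field_simp
  ring

lemma sum_sum_abs_sub_mul_pathVector {n : ℕ} (hn : 2 ≤ n) :
    ∑ i ∈ range n, ∑ j ∈ range n, |(i : ℝ) - j| * pathVector n i * pathVector n j =
      -1 / (1 + cos (π / n)) * (n / 2) := by
  have hpartial (k : ℕ) : (2 * cos (π / (2 * n))) ^ 2 * (∑ i ∈ range (k + 1), pathVector n i) ^ 2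
      = sin (π / n + k * (π / n)) ^ 2 := by
    rw [← mul_pow, two_mul_cos_mul_sum_range_pathVector, mul_pow, ← pow_mul, pow_mul',
      neg_one_sq, one_pow, one_mul]
    push_cast
    ring_nf
  have hquad : (∑ i ∈ range n, ∑ j ∈ range n, |(i : ℝ) - j| * pathVector n i * pathVector n j) *
      (2 * cos (π / (2 * n))) ^ 2 = -n := by
    rw [sum_sum_abs_sub_mul_mul_of_sum_eq_zero n _ (sum_range_pathVector hn), mul_comm,
      mul_left_comm, mul_sum]
    simp only [hpartial, sum_range_sin_add_sq hn]
    ring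
  have hcos : (2 * cos (π / (2 * n))) ^ 2 ≠ 0 :=
    pow_ne_zero 2 (mul_pos two_pos (cos_pi_div_two_mul_pos hn)).ne'
  rw [two_mul_cos_pi_div_two_mul_sq] at hquad hcos
  rw [eq_div_of_mul_eq hcos hquad]
  field_simp [right_ne_zero_of_mul hcos]

/-- For `n ≥ 2` and `xᵢ = (-1)ⁱ sin((2i−1)π/(2n))`, `i = 1,…,n`:
`∑ xᵢ = 0`, `∑ xᵢ² = n/2`, and
`∑ᵢ∑ⱼ |i−j| xᵢ xⱼ = (-1/(1+cos(π/n)))·(n/2)`. -/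
theorem path_graph_optimal_vector (n : ℕ) (hn : 2 ≤ n) (x : Fin n → ℝ)
    (hx : ∀ i : Fin n,
      x i = (-1) ^ (i.1 + 1) * Real.sin ((2 * ((i.1 : ℝ) + 1) - 1) * π / (2 * n))) :
    (∑ i, x i) = 0 ∧
    (∑ i, (x i) ^ 2) = n / 2 ∧
    ∑ i : Fin n, ∑ j : Fin n, |(i : ℝ) - (j : ℝ)| * x i * x j =
      (-1 / (1 + Real.cos (π / n))) * (n / 2) := by
  obtain rfl : x = fun i : Fin n => pathVector n i := funext fun i => by
    rw [hx, pathVector]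
    ring_nf
  exact ⟨(sum_range _).symm.trans (sum_range_pathVector hn),
    (sum_range (pathVector n · ^ 2)).symm.trans (sum_range_pathVector_sq hn),
    by simpa only [sum_range] using sum_sum_abs_sub_mul_pathVector hn⟩
end
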